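/- arXiv:1804.08837 — 10 statements merged into one kernel-verified Lean document; each statement's English description precedes it below -/
import Mathlib

section
/- Let f : S → S' be a function between finite sets, ω a probability distribution on S, z a random variable on S with distribution ω, n a positive integer, and s'_1,…,s'_n fixed elements of S'. Then the number M of sequences s_1,…,s_n of elements of S in which each s ∈ S occurs exactly ω(s)·n times and such that f(s_j) = s'_j for all 1 ≤ j ≤ n satisfies M ≤ e^{H(z|f(z))·n} = e^{(H(z) − H(f(z)))·n}. -/
/-!
Give a sequence `g` the weight `∏ⱼ ω(gⱼ)`. If every `s` occurs exactly `ω(s)·n` times in `g`, this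
weight is `e^{-H(z)·n}`, so `M · e^{-H(z)·n}` is at most the total weight of all sequences lying
over `s'`. That total factorises as `∏ⱼ ω'(s'ⱼ)` with `ω' = f_*ω`, and since `s'` is the image of a
sequence of type `ω`, each `y` occurs `ω'(y)·n` times in it, so the product is `e^{-H(f(z))·n}`.
-/

open Finset Real

lemma prod_comp_eq_prod_pow_card_filter {ι α M : Type*} [Fintype ι] [Fintype α] [DecidableEq α]
    [CommMonoid M] (w : α → M) (g : ι → α) :
    ∏ j, w (g j) = ∏ a, w a ^ #{j | g j = a} := by
  rw [← prod_fiberwise' univ g w]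
  exact prod_congr rfl fun a _ => prod_const _

lemma pow_eq_exp_mul_mul_log {x : ℝ} (hx : 0 ≤ x) {k n : ℕ} (hk : (k : ℝ) = x * n) :
    x ^ k = exp (n * (x * log x)) := by
  rcases hx.eq_or_lt with rfl | hpos
  · have hk0 : k = 0 := by exact_mod_cast (zero_mul (n : ℝ)) ▸ hk
    simp [hk0]
  · rw [← exp_log (pow_pos hpos k), log_pow, hk]
    ring_nf

lemma prod_eq_exp_of_card_filter {ι α : Type*} [Fintype ι] [Fintype α] [DecidableEq α]
    {w : α → ℝ} (hw : ∀ a, 0 ≤ w a) {n : ℕ} {g : ι → α}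
    (hg : ∀ a, (#{j | g j = a} : ℝ) = w a * n) :
    ∏ j, w (g j) = exp (n * ∑ a, w a * log (w a)) := by
  rw [prod_comp_eq_prod_pow_card_filter, mul_sum, exp_sum]
  exact prod_congr rfl fun a _ => pow_eq_exp_mul_mul_log (hw a) (hg a)

lemma card_filter_comp_eq_sum {ι α β : Type*} [Fintype ι] [Fintype α] [DecidableEq α]
    [DecidableEq β] (f : α → β) (g : ι → α) (b : β) :
    #{j | f (g j) = b} = ∑ a with f a = b, #{j | g j = a} := by
  rw [sum_card_fiberwise_eq_card_filter]
  simp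

lemma sum_prod_le_prod_sum_filter {ι α β : Type*} [Fintype ι] [Fintype α] [DecidableEq ι]
    [DecidableEq β] (f : α → β) {w : α → ℝ} (hw : ∀ a, 0 ≤ w a) (t : ι → β)
    {A : Finset (ι → α)} (hA : ∀ g ∈ A, ∀ j, f (g j) = t j) :
    ∑ g ∈ A, ∏ j, w (g j) ≤ ∏ j, ∑ a with f a = t j, w a := by
  rw [prod_univ_sum]
  refine sum_le_sum_of_subset_of_nonneg (fun g hg => ?_) fun g _ _ => prod_nonneg fun j _ => hw _
  simpa [Fintype.mem_piFinset] using hA g hg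

theorem stmt1_general {S S' : Type*} [Fintype S] [Fintype S'] [DecidableEq S] [DecidableEq S']
    (f : S → S') (ω : S → ℝ) (hω : ∀ s, 0 ≤ ω s)
    (n : ℕ) (s' : Fin n → S') :
    (Nat.card {g : Fin n → S // (∀ s : S,
        ((Finset.univ.filter (fun j => g j = s)).card : ℝ) = ω s * n) ∧
        ∀ j, f (g j) = s' j} : ℝ) ≤
      Real.exp (((∑ s, -(ω s * Real.log (ω s))) -
        (∑ y, -((∑ s ∈ Finset.univ.filter (fun s => f s = y), ω s) *
          Real.log (∑ s ∈ Finset.univ.filter (fun s => f s = y), ω s)))) * n) := by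
  set ω' : S' → ℝ := fun y => ∑ s with f s = y, ω s
  rw [Nat.card_eq_fintype_card, Fintype.card_subtype]
  set A := ({g | (∀ s, (#{j | g j = s} : ℝ) = ω s * n) ∧ ∀ j, f (g j) = s' j} :
    Finset (Fin n → S))
  obtain hA | ⟨g₀, hg₀⟩ := A.eq_empty_or_nonempty
  · rw [hA, card_empty, Nat.cast_zero]
    positivity
  obtain ⟨hcount, hfib⟩ := (mem_filter.1 hg₀).2
  have hweight : ∀ g ∈ A, ∏ j, ω (g j) = exp (n * ∑ s, ω s * log (ω s)) :=
    fun g hg => prod_eq_exp_of_card_filter hω (mem_filter.1 hg).2.1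
  have htarget : ∏ j, ω' (s' j) = exp (n * ∑ y, ω' y * log (ω' y)) := by
    simp_rw [← hfib]
    refine prod_eq_exp_of_card_filter (w := ω') (fun y => sum_nonneg fun s _ => hω s) fun y => ?_
    rw [card_filter_comp_eq_sum, Nat.cast_sum, sum_mul]
    exact sum_congr rfl fun s _ => hcount s
  have htotal := sum_prod_le_prod_sum_filter f hω s' (A := A) fun g hg => (mem_filter.1 hg).2.2
  rw [sum_congr rfl hweight, sum_const, nsmul_eq_mul] at htotal
  change _ ≤ ∏ j, ω' (s' j) at htotal
  rw [htarget] at htotal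
  calc (#A : ℝ) ≤ exp (n * ∑ y, ω' y * log (ω' y) - n * ∑ s, ω s * log (ω s)) := by
        rwa [exp_sub, le_div_iff₀ (exp_pos _)]
    _ = _ := by
        simp only [ω', sum_neg_distrib]
        ring_nf

theorem stmt1 {S S' : Type*} [Fintype S] [Fintype S'] [DecidableEq S] [DecidableEq S']
    (f : S → S') (ω : S → ℝ) (hω : ∀ s, 0 ≤ ω s) (hsum : ∑ s, ω s = 1)
    (n : ℕ) (hn : 0 < n) (s' : Fin n → S') :
    (Nat.card {g : Fin n → S // (∀ s : S,
        ((Finset.univ.filter (fun j => g j = s)).card : ℝ) = ω s * n) ∧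
        ∀ j, f (g j) = s' j} : ℝ) ≤
      Real.exp (((∑ s, -(ω s * Real.log (ω s))) -
        (∑ y, -((∑ s ∈ Finset.univ.filter (fun s => f s = y), ω s) *
          Real.log (∑ s ∈ Finset.univ.filter (fun s => f s = y), ω s)))) * n) :=
  stmt1_general f ω hω n s'
end

section
/- Let ω_0 and ω_1 be two probability distributions on a finite set S, and suppose c > 0 satisfies ω_0(s) ≥ c and ω_1(s) ≥ c for every s ∈ S. Then |H(ω_1) − H(ω_0)| ≤ ‖ω_1 − ω_0‖_1 · log(1/c), where ‖ω_1 − ω_0‖_1 = Σ_{s∈S} |ω_1(s) − ω_0(s)| and H is the Shannon entropy with natural logarithm. -/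
/-!
Since both distributions have total mass one, `H(ω₁) - H(ω₀)` does not change when
`t ↦ -t log t` is replaced by `g t = -t log t + t`. The derivative of `g` is `-log t`, which lies in
`[0, log (1/c)]` on `[c, 1]`, where all values of `ω₀` and `ω₁` live; so `g` is
`log (1/c)`-Lipschitz there and the bound follows term by term.
-/

open Real Finset Set

lemma abs_log_le_log_one_div_of_mem_Icc {c t : ℝ} (hc : 0 < c) (ht : t ∈ Icc c 1) :
    |log t| ≤ log (1 / c) := by
  have ht₀ : 0 < t := hc.trans_le ht.1
  rw [abs_of_nonpos (log_nonpos ht₀.le ht.2), one_div, log_inv, neg_le_neg_iff]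
  exact log_le_log hc ht.1

lemma abs_negMulLog_add_self_sub_le {c x y : ℝ} (hc : 0 < c) (hx : x ∈ Icc c 1)
    (hy : y ∈ Icc c 1) :
    |(negMulLog x + x) - (negMulLog y + y)| ≤ log (1 / c) * |x - y| := by
  have hderiv : ∀ t ∈ Icc c 1,
      HasDerivWithinAt (fun t ↦ negMulLog t + t) (-log t) (Icc c 1) t := fun t ht ↦
    (((hasDerivAt_negMulLog (hc.trans_le ht.1).ne').add (hasDerivAt_id' t)).congr_deriv
      (by ring)).hasDerivWithinAt
  exact (convex_Icc c 1).norm_image_sub_le_of_norm_hasDerivWithin_le hderiv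
    (fun t ht ↦ by simpa using abs_log_le_log_one_div_of_mem_Icc hc ht) hy hx

lemma mem_Icc_of_le_of_sum_eq_one {S : Type*} [Fintype S] {ω : S → ℝ} {c : ℝ} (hc : 0 < c)
    (hω : ∀ s, c ≤ ω s) (hsum : ∑ s, ω s = 1) (s : S) : ω s ∈ Icc c 1 :=
  ⟨hω s, hsum ▸ single_le_sum (fun t _ ↦ hc.le.trans (hω t)) (mem_univ s)⟩

theorem stmt2 {S : Type*} [Fintype S] (ω₀ ω₁ : S → ℝ) (c : ℝ) (hc : 0 < c)
    (h₀ : ∀ s, c ≤ ω₀ s) (h₁ : ∀ s, c ≤ ω₁ s)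
    (hs₀ : ∑ s, ω₀ s = 1) (hs₁ : ∑ s, ω₁ s = 1) :
    |(∑ s, -(ω₁ s * Real.log (ω₁ s))) - (∑ s, -(ω₀ s * Real.log (ω₀ s)))| ≤
      (∑ s, |ω₁ s - ω₀ s|) * Real.log (1 / c) := by
  have hshift : (∑ s, -(ω₁ s * log (ω₁ s))) - (∑ s, -(ω₀ s * log (ω₀ s)))
      = ∑ s, ((negMulLog (ω₁ s) + ω₁ s) - (negMulLog (ω₀ s) + ω₀ s)) := by
    simp only [sum_sub_distrib, sum_add_distrib, hs₀, hs₁, negMulLog_eq_neg]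
    ring
  rw [hshift, sum_mul]
  refine (abs_sum_le_sum_abs _ _).trans (sum_le_sum fun s _ ↦ ?_)
  rw [mul_comm]
  exact abs_negMulLog_add_self_sub_le hc (mem_Icc_of_le_of_sum_eq_one hc h₁ hs₁ s)
    (mem_Icc_of_le_of_sum_eq_one hc h₀ hs₀ s)
end

section
/- For integers m ≥ 2 and k ≥ 3, let γ = γ_{m,k} ∈ (0,1) be a minimizer of the function γ ↦ (1 + γ + … + γ^{m−1}) / γ^{(m−1)/k} on (0,1), and define the probability distribution ν_{m,k} on {0,…,m−1} by ν_{m,k}(i) = γ^i / (1 + γ + … + γ^{m−1}). Then ν_{m,k} has expectation Σ_i i·ν_{m,k}(i) = (m−1)/k. -/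
/-! At an interior minimum `γ` of `S(x) / x ^ α` the logarithmic derivative vanishes, i.e.
`γ S'(γ) = α S(γ)`. For `S(x) = ∑_{i<m} x ^ i` the left side is `∑ i γ ^ i`, which is `S(γ)` times
the mean of `ν`. -/

open Finset

theorem IsLocalMin.mul_hasDerivAt_eq_of_div_rpow {f : ℝ → ℝ} {f' x α : ℝ}
    (hf : HasDerivAt f f' x) (hx : 0 < x) (hmin : IsLocalMin (fun y ↦ f y / y ^ α) x) :
    x * f' = α * f x := by
  have hpow : 0 < x ^ α := Real.rpow_pos_of_pos hx α
  have hcrit := hmin.hasDerivAt_eq_zero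
    (hf.div (Real.hasDerivAt_rpow_const (Or.inl hx.ne')) hpow.ne')
  have hnum : f' * x ^ α = f x * (α * x ^ (α - 1)) := by
    rw [div_eq_zero_iff, sub_eq_zero] at hcrit
    exact hcrit.resolve_right (by positivity)
  have hsplit : x ^ α = x * x ^ (α - 1) := by
    rw [Real.rpow_sub hx, Real.rpow_one, mul_div_cancel₀ _ hx.ne']
  apply mul_right_cancel₀ (Real.rpow_pos_of_pos hx (α - 1)).ne'
  linear_combination hnum - f' * hsplit

theorem mul_sum_natCast_mul_pow_pred {R : Type*} [CommSemiring R] (s : Finset ℕ) (x : R) :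
    x * ∑ i ∈ s, (i : R) * x ^ (i - 1) = ∑ i ∈ s, (i : R) * x ^ i := by
  rw [mul_sum]
  refine sum_congr rfl fun i _ ↦ ?_
  rcases i with _ | i
  · simp
  · rw [Nat.add_sub_cancel, pow_succ]; ring

theorem stmt3_general (m k : ℕ) (hm : 2 ≤ m) (γ : ℝ) (hγ0 : 0 < γ) (hγ1 : γ < 1)
    (hmin : ∀ γ' : ℝ, 0 < γ' → γ' < 1 →
      (∑ i ∈ Finset.range m, γ ^ i) / γ ^ (((m : ℝ) - 1) / k) ≤
        (∑ i ∈ Finset.range m, γ' ^ i) / γ' ^ (((m : ℝ) - 1) / k)) :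
    ∑ i ∈ Finset.range m, (i : ℝ) * (γ ^ i / ∑ j ∈ Finset.range m, γ ^ j) =
      ((m : ℝ) - 1) / k := by
  have hS : 0 < ∑ j ∈ range m, γ ^ j :=
    sum_pos (fun i _ ↦ by positivity) ⟨0, mem_range.mpr (by omega)⟩
  have hloc : IsLocalMin (fun x : ℝ ↦ (∑ i ∈ range m, x ^ i) / x ^ (((m : ℝ) - 1) / k)) γ :=
    Filter.mem_of_superset (Ioo_mem_nhds hγ0 hγ1) fun y hy ↦ hmin y hy.1 hy.2
  have hcrit := hloc.mul_hasDerivAt_eq_of_div_rpow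
    (HasDerivAt.fun_sum fun i _ ↦ hasDerivAt_pow i γ) hγ0
  simp_rw [mul_div_assoc', ← sum_div, ← mul_sum_natCast_mul_pow_pred, hcrit]
  exact mul_div_cancel_right₀ _ hS.ne'

theorem stmt3 (m k : ℕ) (hm : 2 ≤ m) (hk : 3 ≤ k) (γ : ℝ) (hγ0 : 0 < γ) (hγ1 : γ < 1)
    (hmin : ∀ γ' : ℝ, 0 < γ' → γ' < 1 →
      (∑ i ∈ Finset.range m, γ ^ i) / γ ^ (((m : ℝ) - 1) / k) ≤
        (∑ i ∈ Finset.range m, γ' ^ i) / γ' ^ (((m : ℝ) - 1) / k)) :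
    ∑ i ∈ Finset.range m, (i : ℝ) * (γ ^ i / ∑ j ∈ Finset.range m, γ ^ j) =
      ((m : ℝ) - 1) / k :=
  stmt3_general m k hm γ hγ0 hγ1 hmin
end

section
/- For integers m ≥ 2 and k ≥ 3, with γ_{m,k} ∈ (0,1) a minimizer of γ ↦ (1+γ+…+γ^{m−1})/γ^{(m−1)/k} and ν_{m,k}(i) = γ_{m,k}^i / (1+γ_{m,k}+…+γ_{m,k}^{m−1}) for i ∈ {0,…,m−1}, the entropy of ν_{m,k} equals log Γ_{m,k}, where Γ_{m,k} is the minimum value of the function. -/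
/-!
Since `ν(i) ∝ γ^i`, its entropy is `log S - (log γ) · (∑ i γ^i) / S` with `S = ∑ γ^i`,
so the claim reduces to the mean `∑ i ν(i)` being the exponent `α = (m-1)/k`.
That is exactly the first-order condition `γ S'(γ) = α S(γ)` for `γ` to minimise `S(x) / x^α`.
-/

open Finset Real

theorem sum_neg_mul_log_div_sum {ι : Type*} (s : Finset ι) (w : ι → ℝ)
    (hw : ∀ i ∈ s, w i ≠ 0) (hS : ∑ i ∈ s, w i ≠ 0) :
    ∑ i ∈ s, -(w i / (∑ j ∈ s, w j) * log (w i / ∑ j ∈ s, w j)) =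
      log (∑ i ∈ s, w i) - (∑ i ∈ s, w i * log (w i)) / ∑ i ∈ s, w i := by
  have hterm : ∀ i ∈ s, -(w i / (∑ j ∈ s, w j) * log (w i / ∑ j ∈ s, w j)) =
      w i / (∑ j ∈ s, w j) * log (∑ j ∈ s, w j) - w i * log (w i) / ∑ j ∈ s, w j := by
    intro i hi
    rw [log_div (hw i hi) hS]
    ring
  rw [sum_congr rfl hterm, sum_sub_distrib, ← sum_mul, ← sum_div, ← sum_div,
    div_self hS, one_mul]

theorem mul_eq_of_isLocalMin_div_rpow {p : ℝ → ℝ} {p' α γ : ℝ} (hγ : 0 < γ)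
    (hp : HasDerivAt p p' γ) (hmin : IsLocalMin (fun x => p x / x ^ α) γ) :
    γ * p' = α * p γ := by
  have hpow : HasDerivAt (fun x => x ^ α) (α * γ ^ (α - 1)) γ :=
    hasDerivAt_rpow_const (Or.inl hγ.ne')
  have hγα : γ ^ α ≠ 0 := (rpow_pos_of_pos hγ α).ne'
  have hzero := hmin.hasDerivAt_eq_zero (hp.div hpow hγα)
  rw [div_eq_zero_iff, sub_eq_zero] at hzero
  have hshift : γ * γ ^ (α - 1) = γ ^ α := by
    conv_rhs => rw [← sub_add_cancel α 1, rpow_add_one hγ.ne']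
    ring
  refine mul_right_cancel₀ hγα ?_
  calc γ * p' * γ ^ α = γ * (p' * γ ^ α) := by ring
    _ = γ * (p γ * (α * γ ^ (α - 1))) := by rw [hzero.resolve_right (pow_ne_zero 2 hγα)]
    _ = α * p γ * (γ * γ ^ (α - 1)) := by ring
    _ = α * p γ * γ ^ α := by rw [hshift]

theorem mul_sum_range_mul_pow_pred (m : ℕ) (γ : ℝ) :
    γ * ∑ i ∈ range m, (i : ℝ) * γ ^ (i - 1) = ∑ i ∈ range m, (i : ℝ) * γ ^ i := by
  rw [mul_sum]
  refine sum_congr rfl fun i _ => ?_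
  cases i with
  | zero => simp
  | succ n => rw [Nat.add_sub_cancel, pow_succ]; ring

theorem sum_range_mul_pow_eq_of_isLocalMin {m : ℕ} {α γ : ℝ} (hγ : 0 < γ)
    (hmin : IsLocalMin (fun x => (∑ i ∈ range m, x ^ i) / x ^ α) γ) :
    ∑ i ∈ range m, (i : ℝ) * γ ^ i = α * ∑ i ∈ range m, γ ^ i := by
  have hderiv : HasDerivAt (fun x : ℝ => ∑ i ∈ range m, x ^ i)
      (∑ i ∈ range m, (i : ℝ) * γ ^ (i - 1)) γ :=
    HasDerivAt.fun_sum fun i _ => hasDerivAt_pow i γ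
  rw [← mul_sum_range_mul_pow_pred]
  exact mul_eq_of_isLocalMin_div_rpow hγ hderiv hmin

theorem stmt4_general (m k : ℕ) (hm : 2 ≤ m) (γ : ℝ) (hγ0 : 0 < γ) (hγ1 : γ < 1)
    (hmin : ∀ γ' : ℝ, 0 < γ' → γ' < 1 →
      (∑ i ∈ Finset.range m, γ ^ i) / γ ^ (((m : ℝ) - 1) / k) ≤
        (∑ i ∈ Finset.range m, γ' ^ i) / γ' ^ (((m : ℝ) - 1) / k)) :
    ∑ i ∈ Finset.range m,
        -((γ ^ i / ∑ j ∈ Finset.range m, γ ^ j) *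
          Real.log (γ ^ i / ∑ j ∈ Finset.range m, γ ^ j)) =
      Real.log ((∑ i ∈ Finset.range m, γ ^ i) / γ ^ (((m : ℝ) - 1) / k)) := by
  set α : ℝ := ((m : ℝ) - 1) / k
  set S : ℝ := ∑ i ∈ range m, γ ^ i
  have hS : 0 < S := sum_pos (fun i _ => pow_pos hγ0 i) ⟨0, mem_range.2 (by omega)⟩
  have hlocal : IsLocalMin (fun x => (∑ i ∈ range m, x ^ i) / x ^ α) γ :=
    Filter.eventually_of_mem (Ioo_mem_nhds hγ0 hγ1) fun x hx => hmin x hx.1 hx.2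
  have hmean : ∑ i ∈ range m, γ ^ i * log (γ ^ i) = α * S * log γ := calc
    _ = (∑ i ∈ range m, (i : ℝ) * γ ^ i) * log γ := by
      rw [sum_mul]
      exact sum_congr rfl fun i _ => by rw [log_pow]; ring
    _ = α * S * log γ := by rw [sum_range_mul_pow_eq_of_isLocalMin hγ0 hlocal]
  rw [sum_neg_mul_log_div_sum _ _ (fun i _ => (pow_pos hγ0 i).ne') hS.ne']
  change log S - (∑ i ∈ range m, γ ^ i * log (γ ^ i)) / S = _
  rw [hmean, log_div hS.ne' (rpow_pos_of_pos hγ0 α).ne', log_rpow hγ0]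
  field_simp

theorem stmt4 (m k : ℕ) (hm : 2 ≤ m) (hk : 3 ≤ k) (γ : ℝ) (hγ0 : 0 < γ) (hγ1 : γ < 1)
    (hmin : ∀ γ' : ℝ, 0 < γ' → γ' < 1 →
      (∑ i ∈ Finset.range m, γ ^ i) / γ ^ (((m : ℝ) - 1) / k) ≤
        (∑ i ∈ Finset.range m, γ' ^ i) / γ' ^ (((m : ℝ) - 1) / k)) :
    ∑ i ∈ Finset.range m,
        -((γ ^ i / ∑ j ∈ Finset.range m, γ ^ j) *
          Real.log (γ ^ i / ∑ j ∈ Finset.range m, γ ^ j)) =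
      Real.log ((∑ i ∈ Finset.range m, γ ^ i) / γ ^ (((m : ℝ) - 1) / k)) :=
  stmt4_general m k hm γ hγ0 hγ1 hmin
end

section
/- Let k ≥ 3 and m ≥ 2, and let τ be an S_k-symmetric probability distribution on T_{m−1,k} with marginal ν (the common distribution of each coordinate). Let z_τ have distribution τ. For any subspace W ⊆ V_k = {v ∈ ℚ^k : Σv_i = 0} containing the vector (1,…,1,−(k−1)), we have H((w̃(z_τ))_{w∈W}) ≥ H(ν) + ((dim W − 1)/(k−2)) · (H(τ) − H(ν)). -/
/-!
Let `H(S)` be the entropy of the observations `(w̃(z_τ))_{w ∈ S}` of a subspace `S ≤ ℚ^k`. The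
observations of `S₁ ⊔ S₂` are the pair of those of `S₁` and `S₂`, and those of `S₁ ⊓ S₂` are a function
of either, so `H` is submodular; by the symmetry of `τ` it is invariant under permuting coordinates.
On subspaces `X ⊇ E = span {1, e_k}`, where `H(E) = H(ν)` and `H(ℚ^k) = H(τ)`, let
`D(X) = H(X) - H(E) - (dim X - 2)/(k - 2) · (H(τ) - H(ν))`; it takes finitely many values, since
`H(S)` only depends on the partition of the finite set `T_{m-1,k}` induced by `S`. A minimiser `X` of `D` of largest dimension
is fixed by every permutation fixing `k`: otherwise, for a moved copy `X'`,
`D(X ⊔ X') + D(X ⊓ X') ≤ 2 D(X)` makes `X ⊔ X'` a larger minimiser. The only such subspaces are `E`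
and `ℚ^k`, where `D = 0`. Finally `1̃` is the constant `m - 1`, so `W` and `W ⊔ span {1} ⊇ E` have
the same entropy, and the latter has dimension `dim W + 1`.
-/

open scoped Classical
open Finset Submodule Module Equiv

section Entropy

variable {T : Type*} [Fintype T] (τ : T → ℝ)

noncomputable def fiberMass {B : Type*} (f : T → B) (t : T) : ℝ :=
  ∑ u ∈ univ.filter (fun u => f u = f t), τ u

/-- The Shannon entropy of `f z` for `z ∼ τ`, summed over `T` rather than over the values of `f`. -/
noncomputable def entropy {B : Type*} (f : T → B) : ℝ :=
  ∑ t, -(τ t * Real.log (fiberMass τ f t))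

variable {τ}

lemma fiberMass_congr {B B' : Type*} {f : T → B} {g : T → B'}
    (h : ∀ u v, f u = f v ↔ g u = g v) : fiberMass τ f = fiberMass τ g := by
  funext t
  simp only [fiberMass, h]

lemma entropy_congr {B B' : Type*} {f : T → B} {g : T → B'}
    (h : ∀ u v, f u = f v ↔ g u = g v) : entropy τ f = entropy τ g := by
  simp only [entropy, fiberMass_congr h]

lemma fiberMass_eq_of_eq {B : Type*} {f : T → B} {t t' : T} (h : f t = f t') :
    fiberMass τ f t = fiberMass τ f t' := by
  simp only [fiberMass, h]

lemma self_le_fiberMass (hpos : ∀ t, 0 ≤ τ t) {B : Type*} (f : T → B) (t : T) :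
    τ t ≤ fiberMass τ f t :=
  single_le_sum (fun u _ => hpos u) (by simp)

lemma entropy_comp_equiv {B : Type*} (f : T → B) (e : T ≃ T) (he : ∀ t, τ (e t) = τ t) :
    entropy τ (f ∘ e) = entropy τ f := by
  have hmass : ∀ t, fiberMass τ (f ∘ e) t = fiberMass τ f (e t) := fun t => by
    simp only [fiberMass, sum_filter, Function.comp_apply]
    rw [← e.sum_comp (fun u => if f u = f (e t) then τ u else 0)]
    simp only [he]
  simp only [entropy, hmass]
  rw [← e.sum_comp (fun t => -(τ t * Real.log (fiberMass τ f t)))]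
  simp only [he]

lemma entropy_id : entropy τ id = ∑ t, -(τ t * Real.log (τ t)) := by
  have hmass : ∀ t, fiberMass τ id t = τ t := fun t => by
    simp [fiberMass, sum_filter]
  simp only [entropy, hmass]

lemma entropy_eq_of_fiber_sums {B : Type*} [Fintype B] [DecidableEq B] (f : T → B) (ν : B → ℝ)
    (hν : ∀ b, ν b = ∑ t ∈ univ.filter (fun t => f t = b), τ t) :
    entropy τ f = ∑ b, -(ν b * Real.log (ν b)) := by
  rw [entropy, ← sum_fiberwise univ f]
  refine sum_congr rfl fun b _ => ?_
  rw [hν, sum_mul, ← sum_neg_distrib]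
  refine sum_congr rfl fun t ht => ?_
  rw [fiberMass, ← (mem_filter.1 ht).2]
  congr!

lemma finite_range_entropy {ι : Type*} {B : ι → Type*} (f : ∀ i, T → B i) :
    (Set.range fun i => entropy τ (f i)).Finite := by
  refine (Set.finite_range fun p : T → Set T => entropy τ p).subset ?_
  rintro _ ⟨i, rfl⟩
  refine ⟨fun t => {u | f i u = f i t}, entropy_congr fun u v => ?_⟩
  exact ⟨fun h => (Set.ext_iff.1 h u).1 rfl, fun h => by rw [h]⟩

lemma sum_div_fiberMass_le_one {B : Type*} (φ : T → B) (s : T) :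
    ∑ t ∈ univ.filter (fun t => φ t = φ s), τ t / fiberMass τ φ t ≤ 1 := by
  rw [sum_congr rfl fun t ht => by rw [fiberMass_eq_of_eq (mem_filter.1 ht).2], ← sum_div]
  exact div_self_le_one _

lemma sum_ite_div_fiberMass_pair_le {B₁ B₂ B₃ : Type*} {f : T → B₁} {g : T → B₂} {κ : T → B₃}
    (hf : ∀ u v, f u = f v → κ u = κ v) (hg : ∀ u v, g u = g v → κ u = κ v) (u v : T) :
    ∑ t, (if f t = f u ∧ g t = g v then τ t / fiberMass τ (fun t => (f t, g t)) t else 0) ≤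
      if κ u = κ v then 1 else 0 := by
  by_cases hne : ∃ s, f s = f u ∧ g s = g v
  · obtain ⟨s, hsu, hsv⟩ := hne
    rw [if_pos ((hf _ _ hsu).symm.trans (hg _ _ hsv)), ← sum_filter]
    convert sum_div_fiberMass_le_one (τ := τ) (fun t => (f t, g t)) s using 3
    simp [hsu, hsv]
  · push Not at hne
    rw [sum_eq_zero fun t _ => if_neg fun h => hne t h.1 h.2]
    split_ifs <;> norm_num

/-- Expanding `fiberMass τ f t * fiberMass τ g t` as a sum over pairs `(u, v)`, each pair contributes
at most `τ u * τ v / fiberMass τ κ u`, and only when `κ u = κ v`. -/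
lemma sum_mul_fiberMass_ratio_le (hpos : ∀ t, 0 ≤ τ t) {B₁ B₂ B₃ : Type*}
    (f : T → B₁) (g : T → B₂) (κ : T → B₃)
    (hf : ∀ u v, f u = f v → κ u = κ v) (hg : ∀ u v, g u = g v → κ u = κ v) :
    ∑ t, τ t * (fiberMass τ f t * fiberMass τ g t /
      (fiberMass τ (fun t => (f t, g t)) t * fiberMass τ κ t)) ≤ ∑ t, τ t := by
  set P := fiberMass τ (fun t => (f t, g t))
  set K := fiberMass τ κ
  have hexpand : ∀ t, τ t * (fiberMass τ f t * fiberMass τ g t / (P t * K t)) =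
      ∑ u, ∑ v, τ u * τ v / K u * (if f t = f u ∧ g t = g v then τ t / P t else 0) := by
    intro t
    rw [fiberMass, fiberMass, sum_filter, sum_filter, sum_mul_sum, sum_div, mul_sum]
    refine sum_congr rfl fun u _ => ?_
    rw [sum_div, mul_sum]
    refine sum_congr rfl fun v _ => ?_
    by_cases hu : f t = f u
    · have hK : K t = K u := fiberMass_eq_of_eq (hf _ _ hu)
      rw [hK]
      by_cases hv : g t = g v
      · simp [hu, hv, eq_comm]
        ring
      · simp [hu, hv, eq_comm]
    · simp [hu, eq_comm]
  calc ∑ t, τ t * (fiberMass τ f t * fiberMass τ g t / (P t * K t))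
      = ∑ u, ∑ v, τ u * τ v / K u *
          ∑ t, (if f t = f u ∧ g t = g v then τ t / P t else 0) := by
        simp only [hexpand, mul_sum]
        rw [sum_comm]
        exact sum_congr rfl fun u _ => sum_comm
    _ ≤ ∑ u, ∑ v, τ u * τ v / K u * (if κ u = κ v then 1 else 0) := by
        gcongr with u _ v _
        · exact div_nonneg (mul_nonneg (hpos u) (hpos v)) (sum_nonneg fun w _ => hpos w)
        · exact sum_ite_div_fiberMass_pair_le hf hg u v
    _ = ∑ u, τ u / K u * K u := by
        refine sum_congr rfl fun u _ => ?_
        simp only [K, fiberMass, sum_filter, mul_sum]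
        refine sum_congr rfl fun v _ => ?_
        by_cases h : κ u = κ v
        · simp [h, eq_comm]
          ring
        · simp [h, eq_comm]
    _ ≤ ∑ u, τ u := by
        refine sum_le_sum fun u _ => ?_
        rcases eq_or_ne (K u) 0 with h | h
        · simp [h, hpos u]
        · rw [div_mul_cancel₀ _ h]

/-- Termwise `log x ≤ x - 1` for the ratio `x` of `sum_mul_fiberMass_ratio_le`. -/
theorem entropy_prod_add_entropy_le (hpos : ∀ t, 0 ≤ τ t) {B₁ B₂ B₃ : Type*}
    (f : T → B₁) (g : T → B₂) (κ : T → B₃)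
    (hf : ∀ u v, f u = f v → κ u = κ v) (hg : ∀ u v, g u = g v → κ u = κ v) :
    entropy τ (fun t => (f t, g t)) + entropy τ κ ≤ entropy τ f + entropy τ g := by
  set P := fiberMass τ (fun t => (f t, g t))
  set F := fiberMass τ f
  set G := fiberMass τ g
  set K := fiberMass τ κ
  have hterm : ∀ t, -(τ t * Real.log (P t)) + -(τ t * Real.log (K t)) -
      (-(τ t * Real.log (F t)) + -(τ t * Real.log (G t))) ≤
      τ t * (F t * G t / (P t * K t)) - τ t := by
    intro t
    rcases (hpos t).eq_or_lt with h | h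
    · simp [← h]
    have hP : 0 < P t := h.trans_le (self_le_fiberMass hpos _ t)
    have hF : 0 < F t := h.trans_le (self_le_fiberMass hpos _ t)
    have hG : 0 < G t := h.trans_le (self_le_fiberMass hpos _ t)
    have hK : 0 < K t := h.trans_le (self_le_fiberMass hpos _ t)
    have hlog := mul_le_mul_of_nonneg_left (Real.log_le_sub_one_of_pos
      (show 0 < F t * G t / (P t * K t) by positivity)) h.le
    rw [Real.log_div (by positivity) (by positivity), Real.log_mul hF.ne' hG.ne',
      Real.log_mul hP.ne' hK.ne'] at hlog
    linarith
  have := sum_le_sum fun t (_ : t ∈ univ) => hterm t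
  rw [sum_sub_distrib, sum_sub_distrib, sum_add_distrib, sum_add_distrib] at this
  have := sum_mul_fiberMass_ratio_le hpos f g κ hf hg
  simp only [entropy]
  linarith

end Entropy

section Interpolation

variable {𝕜 V : Type*} [DivisionRing 𝕜] [AddCommGroup V] [Module 𝕜 V] [FiniteDimensional 𝕜 V]
  {G : Type*} (g : G → V ≃ₗ[𝕜] V) {E : Submodule 𝕜 V}

theorem nonneg_of_submodular_of_irreducible {D : Submodule 𝕜 V → ℝ} (hfin : (Set.range D).Finite)
    (hsub : ∀ X Y, D (X ⊔ Y) + D (X ⊓ Y) ≤ D X + D Y)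
    (hg : ∀ σ X, D (X.map (g σ : V →ₗ[𝕜] V)) = D X) (hE : ∀ σ, E.map (g σ : V →ₗ[𝕜] V) = E)
    (hirr : ∀ X, E ≤ X → (∀ σ, X.map (g σ : V →ₗ[𝕜] V) = X) → X = E ∨ X = ⊤)
    (hDE : 0 ≤ D E) (hDtop : 0 ≤ D ⊤) {X : Submodule 𝕜 V} (hX : E ≤ X) : 0 ≤ D X := by
  let key : Submodule 𝕜 V → ℝ ×ₗ ℕ := fun X => toLex (D X, finrank 𝕜 V - finrank 𝕜 X)
  have hkey_fin : (key '' {X | E ≤ X}).Finite := by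
    refine ((hfin.prod (Set.finite_Iic (finrank 𝕜 V))).image
      fun p : ℝ × ℕ => toLex (p.1, finrank 𝕜 V - p.2)).subset ?_
    rintro _ ⟨Y, -, rfl⟩
    exact ⟨(D Y, finrank 𝕜 Y), ⟨⟨Y, rfl⟩, Submodule.finrank_le Y⟩, rfl⟩
  -- minimise `D`, and among the minimisers maximise the dimension
  obtain ⟨_, ⟨Y, hEY, rfl⟩, hmin⟩ :=
    Set.exists_min_image _ id hkey_fin ⟨_, ⟨E, le_refl E, rfl⟩⟩
  simp only [Set.forall_mem_image, id, Set.mem_ofPred_eq, key, Prod.Lex.toLex_le_toLex] at hmin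
  suffices hY : 0 ≤ D Y by
    rcases hmin hX with hlt | ⟨heq, -⟩ <;> linarith
  by_contra! hneg
  obtain ⟨σ, hσ⟩ : ∃ σ, Y.map (g σ : V →ₗ[𝕜] V) ≠ Y := by
    by_contra! hinv
    rcases hirr Y hEY hinv with rfl | rfl <;> linarith
  set Y' := Y.map (g σ : V →ₗ[𝕜] V)
  have hlt : finrank 𝕜 Y < finrank 𝕜 ↥(Y ⊔ Y') := by
    refine Submodule.finrank_lt_finrank_of_lt (lt_of_le_of_ne le_sup_left fun heq => hσ ?_)
    exact Submodule.eq_of_le_of_finrank_eq (heq ▸ le_sup_right) (LinearEquiv.finrank_map_eq _ _)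
  have := hsub Y Y'
  have := hg σ Y
  have := Submodule.finrank_le (Y ⊔ Y')
  rcases hmin (hEY.trans le_sup_left) with h1 | ⟨h1, h2⟩
  · rcases hmin (le_inf hEY (hE σ ▸ Submodule.map_mono hEY)) with h3 | ⟨h3, -⟩ <;> linarith
  · omega

theorem linearInterpolation_le_of_submodular {h : Submodule 𝕜 V → ℝ}
    (hfin : (Set.range h).Finite) (hsub : ∀ X Y, h (X ⊔ Y) + h (X ⊓ Y) ≤ h X + h Y)
    (hg : ∀ σ X, h (X.map (g σ : V →ₗ[𝕜] V)) = h X) (hE : ∀ σ, E.map (g σ : V →ₗ[𝕜] V) = E)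
    (hirr : ∀ X, E ≤ X → (∀ σ, X.map (g σ : V →ₗ[𝕜] V) = X) → X = E ∨ X = ⊤)
    {X : Submodule 𝕜 V} (hX : E ≤ X) :
    h E + ((finrank 𝕜 X - finrank 𝕜 E : ℝ) / (finrank 𝕜 V - finrank 𝕜 E)) * (h ⊤ - h E) ≤
      h X := by
  set c := (h ⊤ - h E) / (finrank 𝕜 V - finrank 𝕜 E)
  set D : Submodule 𝕜 V → ℝ := fun X => h X - h E - (finrank 𝕜 X - finrank 𝕜 E) * c
  have hD : 0 ≤ D X := by
    refine nonneg_of_submodular_of_irreducible g ?_ (fun X Y => ?_) (fun σ X => ?_) hE hirr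
      (by simp [D]) ?_ hX
    · refine ((hfin.prod (Set.finite_Iic (finrank 𝕜 V))).image
        fun p : ℝ × ℕ => p.1 - h E - (p.2 - finrank 𝕜 E) * c).subset ?_
      rintro _ ⟨Y, rfl⟩
      exact ⟨(h Y, finrank 𝕜 Y), ⟨⟨Y, rfl⟩, Submodule.finrank_le Y⟩, rfl⟩
    · have hdim : (finrank 𝕜 ↥(X ⊔ Y) + finrank 𝕜 ↥(X ⊓ Y) : ℝ) =
          finrank 𝕜 X + finrank 𝕜 Y := by
        exact_mod_cast Submodule.finrank_sup_add_finrank_inf_eq X Y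
      linear_combination hsub X Y - c * hdim
    · simp only [D, hg, LinearEquiv.finrank_map_eq]
    · rcases eq_or_ne (finrank 𝕜 V : ℝ) (finrank 𝕜 E) with hn | hn
      · have : E = ⊤ := Submodule.eq_top_of_finrank_eq (by exact_mod_cast hn.symm)
        simp [D, this, hn]
      · simp only [D, finrank_top, c]
        rw [mul_div_cancel₀ _ (sub_ne_zero.2 hn)]
        simp
  simp only [D, c] at hD
  rw [div_mul_eq_mul_div, mul_div_assoc]
  linarith

end Interpolation

theorem eq_span_one_single_or_eq_top {𝕜 ι : Type*} [Field 𝕜] [CharZero 𝕜] [Fintype ι]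
    [DecidableEq ι] (K : ι) (X : Submodule 𝕜 (ι → 𝕜)) (hE : span 𝕜 {1, Pi.single K 1} ≤ X)
    (hX : ∀ σ : Perm ι, σ K = K →
      X.map (LinearEquiv.funCongrLeft 𝕜 𝕜 σ : (ι → 𝕜) →ₗ[𝕜] (ι → 𝕜)) = X) :
    X = span 𝕜 {1, Pi.single K 1} ∨ X = ⊤ := by
  have hone : (1 : ι → 𝕜) ∈ X := hE (subset_span (by simp))
  have hsingleK : Pi.single K (1 : 𝕜) ∈ X := hE (subset_span (by simp))
  have hperm : ∀ σ : Perm ι, σ K = K → ∀ v ∈ X, v ∘ σ ∈ X := fun σ hσ v hv => by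
    rw [← hX σ hσ]
    exact mem_map_of_mem hv
  rcases eq_or_ne X (span 𝕜 {1, Pi.single K 1}) with h | hne
  · exact Or.inl h
  right
  obtain ⟨v, hvX, hvE⟩ := SetLike.exists_of_lt (lt_of_le_of_ne hE hne.symm)
  obtain ⟨i, j, hiK, hjK, hij⟩ : ∃ i j, i ≠ K ∧ j ≠ K ∧ v i ≠ v j := by
    by_contra! hconst
    obtain ⟨c, hc⟩ : ∃ c, ∀ a, a ≠ K → v a = c := by
      by_cases h : ∃ a, a ≠ K
      · obtain ⟨a, ha⟩ := h
        exact ⟨v a, fun b hb => hconst b a hb ha⟩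
      · push Not at h
        exact ⟨0, fun a ha => absurd (h a) ha⟩
    refine hvE (mem_span_pair.2 ⟨c, v K - c, funext fun a => ?_⟩)
    by_cases ha : a = K
    · subst ha
      simp
    · simp [ha, hc a ha]
  have hij' : i ≠ j := fun h => hij (h ▸ rfl)
  have hdiff : Pi.single i 1 - Pi.single j 1 ∈ X := by
    have hmem := X.sub_mem hvX (hperm (swap i j) (swap_apply_of_ne_of_ne hiK.symm hjK.symm) v hvX)
    have hvswap : v - v ∘ swap i j = (v i - v j) • (Pi.single i 1 - Pi.single j 1) := by
      funext a
      by_cases hai : a = i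
      · subst hai
        simp [hij']
      by_cases haj : a = j
      · subst haj
        simp [hai, swap_apply_right]
      · simp [hai, haj, swap_apply_of_ne_of_ne hai haj]
    rw [hvswap] at hmem
    exact (X.smul_mem_iff (sub_ne_zero.2 hij)).1 hmem
  have hdiff' : ∀ a, a ≠ K → Pi.single i 1 - Pi.single a 1 ∈ X := by
    intro a haK
    rcases eq_or_ne a i with rfl | hai
    · simp
    have := hperm (swap j a) (swap_apply_of_ne_of_ne hjK.symm haK.symm) _ hdiff
    rwa [Pi.sub_comp, Pi.single_comp_equiv, Pi.single_comp_equiv, symm_swap,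
      swap_apply_of_ne_of_ne hij' hai.symm, swap_apply_left] at this
  have hsingle_i : Pi.single i (1 : 𝕜) ∈ X := by
    have hcard : ((univ.erase K).card : 𝕜) ≠ 0 :=
      Nat.cast_ne_zero.2 (card_ne_zero_of_mem (mem_erase.2 ⟨hiK, mem_univ i⟩))
    have hsum : ∑ a ∈ univ.erase K, (Pi.single i 1 - Pi.single a 1) + (1 - Pi.single K 1) =
        ((univ.erase K).card : 𝕜) • Pi.single i (1 : 𝕜) := by
      rw [sum_sub_distrib, sum_const, sum_erase_eq_sub (mem_univ K), ← Nat.cast_smul_eq_nsmul 𝕜]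
      have : ∑ a, Pi.single a (1 : 𝕜) = 1 := univ_sum_single (1 : ι → 𝕜)
      rw [this]
      abel
    rw [← X.smul_mem_iff hcard, ← hsum]
    exact X.add_mem (X.sum_mem fun a ha => hdiff' a (ne_of_mem_erase ha)) (X.sub_mem hone hsingleK)
  have hsingle : ∀ a, Pi.single a (1 : 𝕜) ∈ X := by
    intro a
    rcases eq_or_ne a K with rfl | haK
    · exact hsingleK
    · simpa using X.sub_mem hsingle_i (hdiff' a haK)
  rw [eq_top_iff, ← (Pi.basisFun 𝕜 ι).span_eq, span_le]
  rintro _ ⟨a, rfl⟩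
  simpa using hsingle a

lemma finrank_span_one_single {𝕜 ι : Type*} [Field 𝕜] [DecidableEq ι] {K a : ι} (ha : a ≠ K) :
    finrank 𝕜 (span 𝕜 {(1 : ι → 𝕜), Pi.single K 1}) = 2 := by
  have hli : LinearIndependent 𝕜 ![(1 : ι → 𝕜), Pi.single K 1] := by
    refine LinearIndependent.pair_iff.2 fun s t hst => ?_
    have hs : s = 0 := by simpa [ha] using congrFun hst a
    subst hs
    simpa using congrFun hst K
  have := finrank_span_eq_card hli
  rwa [Matrix.range_cons_cons_empty, Fintype.card_fin] at this

lemma map_funCongrLeft_span_one_single {𝕜 ι : Type*} [Semiring 𝕜] [DecidableEq ι] {K : ι}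
    {σ : Perm ι} (hσ : σ K = K) :
    (span 𝕜 {(1 : ι → 𝕜), Pi.single K 1}).map
      (LinearEquiv.funCongrLeft 𝕜 𝕜 σ : (ι → 𝕜) →ₗ[𝕜] (ι → 𝕜)) = span 𝕜 {1, Pi.single K 1} := by
  have hσ' : σ.symm K = K := σ.symm_apply_eq.2 hσ.symm
  rw [map_span, Set.image_pair]
  congr 3
  exact (Pi.single_comp_equiv σ K 1).trans (by rw [hσ'])

/-- `T_{m-1,k}`; its coordinates are at most `m - 1`, so taking them in `Fin m` loses nothing. -/
abbrev LatticeSimplex (m k : ℕ) := {a : Fin k → Fin m // ∑ i, (a i : ℕ) = m - 1}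

namespace LatticeSimplex

variable {m k : ℕ}

def relabel (σ : Perm (Fin k)) : LatticeSimplex m k ≃ LatticeSimplex m k where
  toFun t := ⟨t.1 ∘ σ, (Equiv.sum_comp σ fun i => (t.1 i : ℕ)).trans t.2⟩
  invFun t := ⟨t.1 ∘ σ.symm, (Equiv.sum_comp σ.symm fun i => (t.1 i : ℕ)).trans t.2⟩
  left_inv t := by ext; simp
  right_inv t := by ext; simp

noncomputable def pairing (t : LatticeSimplex m k) : (Fin k → ℚ) →ₗ[ℚ] ℚ where
  toFun w := ∑ i, w i * (t.1 i : ℚ)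
  map_add' _ _ := by simp [add_mul, sum_add_distrib]
  map_smul' _ _ := by simp [mul_sum, mul_assoc]

/-- `observe S t = (w̃(t))_{w ∈ S}`. -/
noncomputable def observe (S : Submodule ℚ (Fin k → ℚ)) (t : LatticeSimplex m k) : S → ℚ :=
  fun w => pairing t w

lemma observe_eq_observe_iff {S : Submodule ℚ (Fin k → ℚ)} {u v : LatticeSimplex m k} :
    observe S u = observe S v ↔ S ≤ LinearMap.ker (pairing u - pairing v) := by
  simp [funext_iff, observe, SetLike.le_def, sub_eq_zero]

lemma pairing_one (t : LatticeSimplex m k) : pairing t 1 = (m - 1 : ℕ) := by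
  simp [pairing, ← t.2]

lemma pairing_single (t : LatticeSimplex m k) (i : Fin k) :
    pairing t (Pi.single i 1) = (t.1 i : ℕ) := by
  simp [pairing, Pi.single_apply]

lemma pairing_comp_perm (t : LatticeSimplex m k) (σ : Perm (Fin k)) :
    (pairing t).comp (LinearEquiv.funCongrLeft ℚ ℚ σ : (Fin k → ℚ) →ₗ[ℚ] (Fin k → ℚ)) =
      pairing (relabel σ.symm t) := by
  refine LinearMap.ext fun w => ?_
  simp [pairing, relabel, ← Equiv.sum_comp σ (fun i => w i * (t.1 (σ.symm i) : ℚ))]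

noncomputable def subspaceEntropy (τ : LatticeSimplex m k → ℝ) (S : Submodule ℚ (Fin k → ℚ)) :
    ℝ :=
  entropy τ (observe S)

variable {τ : LatticeSimplex m k → ℝ}

lemma finite_range_subspaceEntropy : (Set.range (subspaceEntropy τ)).Finite :=
  finite_range_entropy observe

lemma subspaceEntropy_sup_add_inf_le (hpos : ∀ t, 0 ≤ τ t) (S₁ S₂ : Submodule ℚ (Fin k → ℚ)) :
    subspaceEntropy τ (S₁ ⊔ S₂) + subspaceEntropy τ (S₁ ⊓ S₂) ≤
      subspaceEntropy τ S₁ + subspaceEntropy τ S₂ := by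
  have hsup : subspaceEntropy τ (S₁ ⊔ S₂) = entropy τ (fun t => (observe S₁ t, observe S₂ t)) :=
    entropy_congr fun u v => by simp only [observe_eq_observe_iff, sup_le_iff, Prod.ext_iff]
  rw [hsup]
  refine entropy_prod_add_entropy_le hpos _ _ _ (fun u v h => ?_) (fun u v h => ?_)
  · rw [observe_eq_observe_iff] at h ⊢
    exact inf_le_left.trans h
  · rw [observe_eq_observe_iff] at h ⊢
    exact inf_le_right.trans h

lemma subspaceEntropy_map_perm (hτ : ∀ σ t, τ (relabel σ t) = τ t) (σ : Perm (Fin k))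
    (S : Submodule ℚ (Fin k → ℚ)) :
    subspaceEntropy τ (S.map (LinearEquiv.funCongrLeft ℚ ℚ σ : (Fin k → ℚ) →ₗ[ℚ] (Fin k → ℚ))) =
      subspaceEntropy τ S := by
  have hobs : subspaceEntropy τ
      (S.map (LinearEquiv.funCongrLeft ℚ ℚ σ : (Fin k → ℚ) →ₗ[ℚ] (Fin k → ℚ))) =
      entropy τ (observe S ∘ relabel σ.symm) :=
    entropy_congr fun u v => by
      simp only [Function.comp_apply, observe_eq_observe_iff, map_le_iff_le_comap,
        ← LinearMap.ker_comp, LinearMap.sub_comp, pairing_comp_perm]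
  rw [hobs, subspaceEntropy, entropy_comp_equiv _ _ (hτ σ.symm)]

lemma subspaceEntropy_top : subspaceEntropy τ ⊤ = ∑ t, -(τ t * Real.log (τ t)) := by
  rw [subspaceEntropy, ← entropy_id]
  refine entropy_congr fun u v => ⟨fun h => Subtype.ext (funext fun i => ?_), fun h => congrArg _ h⟩
  have := observe_eq_observe_iff.1 h (mem_top (x := Pi.single i 1))
  rw [LinearMap.mem_ker, LinearMap.sub_apply, sub_eq_zero, pairing_single, pairing_single] at this
  exact Fin.ext (by exact_mod_cast this)

lemma subspaceEntropy_span_one_single (K : Fin k) :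
    subspaceEntropy τ (span ℚ {1, Pi.single K 1}) = entropy τ (fun t => t.1 K) := by
  refine entropy_congr fun u v => ?_
  simp only [observe_eq_observe_iff, span_le, Set.insert_subset_iff, Set.singleton_subset_iff,
    SetLike.mem_coe, LinearMap.mem_ker, LinearMap.sub_apply, sub_eq_zero, pairing_one,
    pairing_single, true_and, Nat.cast_inj, Fin.val_inj]

lemma subspaceEntropy_sup_span_one (S : Submodule ℚ (Fin k → ℚ)) :
    subspaceEntropy τ (S ⊔ span ℚ {1}) = subspaceEntropy τ S := by
  refine entropy_congr fun u v => ?_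
  simp only [observe_eq_observe_iff, sup_le_iff, span_singleton_le_iff_mem, LinearMap.mem_ker,
    LinearMap.sub_apply, sub_eq_zero, pairing_one, and_true]

end LatticeSimplex

lemma single_mem_sup_span_one {k : ℕ} {K : Fin k} (hK : (K : ℕ) = k - 1)
    {W : Submodule ℚ (Fin k → ℚ)}
    (hv0 : (fun i : Fin k => if (i : ℕ) = k - 1 then -((k : ℚ) - 1) else 1) ∈ W) :
    Pi.single K 1 ∈ W ⊔ span ℚ {1} := by
  have hk0 : (k : ℚ) ≠ 0 := Nat.cast_ne_zero.2 K.pos.ne'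
  have hsingle : Pi.single K (1 : ℚ) =
      (k : ℚ)⁻¹ • (1 - fun i : Fin k => if (i : ℕ) = k - 1 then -((k : ℚ) - 1) else 1) := by
    funext i
    by_cases hi : i = K
    · simp [hi, hK, hk0]
    · have : (i : ℕ) ≠ k - 1 := fun h => hi (Fin.ext (h.trans hK.symm))
      simp [hi, this]
  rw [hsingle]
  exact smul_mem _ _ (sub_mem (mem_sup_right (mem_span_singleton_self 1)) (mem_sup_left hv0))

open LatticeSimplex

open scoped Classical in
theorem stmt8_general (m k : ℕ) (hk : 3 ≤ k)
    (τ : {a : Fin k → Fin m // ∑ i, (a i : ℕ) = m - 1} → ℝ)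
    (hpos : ∀ t, 0 ≤ τ t)
    (hsym : ∀ t t' : {a : Fin k → Fin m // ∑ i, (a i : ℕ) = m - 1},
      (∃ σ : Equiv.Perm (Fin k), t'.1 = t.1 ∘ σ) → τ t' = τ t)
    (ν : Fin m → ℝ)
    (hν : ∀ (i : Fin k) (a : Fin m),
      ν a = ∑ t ∈ Finset.univ.filter
        (fun t : {a : Fin k → Fin m // ∑ i, (a i : ℕ) = m - 1} => t.1 i = a), τ t)
    (W : Submodule ℚ (Fin k → ℚ)) (hW : ∀ w ∈ W, ∑ i, w i = 0)
    (hv0 : (fun i : Fin k => if (i : ℕ) = k - 1 then -((k : ℚ) - 1) else 1) ∈ W) :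
    (∑ a, -(ν a * Real.log (ν a))) +
      (((Module.finrank ℚ W : ℝ) - 1) / ((k : ℝ) - 2)) *
        ((∑ t, -(τ t * Real.log (τ t))) - (∑ a, -(ν a * Real.log (ν a)))) ≤
      ∑ t, -(τ t * Real.log (∑ t' ∈ Finset.univ.filter
        (fun t' => (fun w : W => ∑ i, (w : Fin k → ℚ) i * (t'.1 i : ℚ)) =
          (fun w : W => ∑ i, (w : Fin k → ℚ) i * (t.1 i : ℚ))), τ t')) := by
  set K : Fin k := ⟨k - 1, by omega⟩
  have hE : span ℚ {1, Pi.single K 1} ≤ W ⊔ span ℚ {1} :=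
    span_le.2 (Set.insert_subset (mem_sup_right (mem_span_singleton_self 1))
      (Set.singleton_subset_iff.2 (single_mem_sup_span_one rfl hv0)))
  have hone : (1 : Fin k → ℚ) ∉ W := fun h => by
    have := hW 1 h
    simp at this
    omega
  have key := linearInterpolation_le_of_submodular
    (fun σ : {σ : Perm (Fin k) // σ K = K} => LinearEquiv.funCongrLeft ℚ ℚ σ.1)
    finite_range_subspaceEntropy (subspaceEntropy_sup_add_inf_le hpos)
    (fun σ => subspaceEntropy_map_perm (fun σ t => hsym t _ ⟨σ, rfl⟩) σ.1)
    (fun σ => map_funCongrLeft_span_one_single σ.2)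
    (fun X hX hinv => eq_span_one_single_or_eq_top K X hX fun σ hσ => hinv ⟨σ, hσ⟩) hE
  rw [subspaceEntropy_sup_span_one, subspaceEntropy_top, subspaceEntropy_span_one_single,
    entropy_eq_of_fiber_sums _ ν (hν K), finrank_sup_span_singleton hone,
    finrank_span_one_single (a := ⟨0, by omega⟩) (Fin.ne_of_val_ne (by simp [K]; omega)),
    finrank_fin_fun] at key
  have hcoef : ((finrank ℚ W + 1 : ℕ) - (2 : ℕ) : ℝ) = finrank ℚ W - 1 := by
    push_cast
    ring
  rwa [hcoef] at key

open scoped Classical in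
theorem stmt8 (m k : ℕ) (hm : 2 ≤ m) (hk : 3 ≤ k)
    (τ : {a : Fin k → Fin m // ∑ i, (a i : ℕ) = m - 1} → ℝ)
    (hpos : ∀ t, 0 ≤ τ t) (hsum : ∑ t, τ t = 1)
    (hsym : ∀ t t' : {a : Fin k → Fin m // ∑ i, (a i : ℕ) = m - 1},
      (∃ σ : Equiv.Perm (Fin k), t'.1 = t.1 ∘ σ) → τ t' = τ t)
    (ν : Fin m → ℝ)
    (hν : ∀ (i : Fin k) (a : Fin m),
      ν a = ∑ t ∈ Finset.univ.filter
        (fun t : {a : Fin k → Fin m // ∑ i, (a i : ℕ) = m - 1} => t.1 i = a), τ t)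
    (W : Submodule ℚ (Fin k → ℚ)) (hW : ∀ w ∈ W, ∑ i, w i = 0)
    (hv0 : (fun i : Fin k => if (i : ℕ) = k - 1 then -((k : ℚ) - 1) else 1) ∈ W) :
    (∑ a, -(ν a * Real.log (ν a))) +
      (((Module.finrank ℚ W : ℝ) - 1) / ((k : ℝ) - 2)) *
        ((∑ t, -(τ t * Real.log (τ t))) - (∑ a, -(ν a * Real.log (ν a)))) ≤
      ∑ t, -(τ t * Real.log (∑ t' ∈ Finset.univ.filter
        (fun t' => (fun w : W => ∑ i, (w : Fin k → ℚ) i * (t'.1 i : ℚ)) =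
          (fun w : W => ∑ i, (w : Fin k → ℚ) i * (t.1 i : ℚ))), τ t')) :=
  stmt8_general m k hk τ hpos hsym ν hν W hW hv0
end

section
/- Let P ≥ k ≥ 3 be primes/integers with P prime. Then there exists a k-colored sum-free set (y_{1,j},…,y_{k,j})_{j=1}^R in 𝔽_P of size R ≥ P · exp(−12√(log P · log k)). -/
/-!
Behrend's construction. Points `a` of a sphere in the box `{0, …, d - 1}ⁿ` are read as base
`k d` numerals `map (k d) a`; the first `k - 1` colours receive `map (k d) a` and the last one
`-(k - 1) • map (k d) a`. All the natural numbers involved are below `P`, so a rainbow sum vanishes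
in `ZMod P` iff `a₁ + ⋯ + a_{k-1} = (k - 1) • a_k` holds in `ℕ`, and since digit sums stay below
the base (no carries) this holds coordinatewise. On a sphere that forces all the `aᵢ` to be equal.
With `n = ⌈√(log P / log k)⌉` and `d` the largest integer with `kⁿ⁺¹ dⁿ ≤ P`, Behrend's pigeonhole
sphere with at least `dⁿ / (n d²)` points is large enough; when `log P ≤ 144 log k` a single
point suffices.
-/

open Finset Real

def IsColoredSumFree {G : Type*} [AddCommMonoid G] {k R : ℕ} (y : Fin k → Fin R → G) : Prop :=
  ∀ j : Fin k → Fin R, ∑ i, y i (j i) = 0 ↔ ∃ c, ∀ i, j i = c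

theorem isColoredSumFree_zero_fin_one {G : Type*} [AddCommMonoid G] {k : ℕ} :
    IsColoredSumFree (0 : Fin k → Fin 1 → G) :=
  fun _ => iff_of_true (by simp) ⟨0, fun _ => Subsingleton.elim _ _⟩

namespace Behrend

variable {n d r : ℕ}

theorem eq_of_sum_eq_card_nsmul {ι : Type*} [Fintype ι] {v : ι → Fin n → ℕ} {w : Fin n → ℕ}
    (hv : ∀ i, v i ∈ sphere n d r) (hw : w ∈ sphere n d r)
    (hsum : ∑ i, v i = Fintype.card ι • w) (i : ι) : v i = w := by
  have hv' (i : ι) : ∑ t, (v i t : ℤ) ^ 2 = r := by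
    exact_mod_cast (mem_filter.1 (hv i)).2
  have hw' : ∑ t, (w t : ℤ) ^ 2 = r := by exact_mod_cast (mem_filter.1 hw).2
  have hsum' (t : Fin n) : ∑ i, (v i t : ℤ) = Fintype.card ι * w t := by
    have := congrFun hsum t
    simp only [Finset.sum_apply, Pi.smul_apply, smul_eq_mul] at this
    exact_mod_cast this
  have hdist_eq (i : ι) : ∑ t, ((v i t : ℤ) - w t) ^ 2 = 2 * r - 2 * ∑ t, (v i t : ℤ) * w t := by
    simp only [sub_sq, sum_add_distrib, sum_sub_distrib, mul_assoc, ← mul_sum, hv', hw']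
    ring
  -- `∑ i, ‖v i - w‖² = 2 |ι| r - 2 ⟪∑ i, v i, w⟫ = 2 |ι| r - 2 |ι| ‖w‖² = 0`
  have hdist : ∑ i, ∑ t, ((v i t : ℤ) - w t) ^ 2 = 0 := by
    simp only [hdist_eq, sum_sub_distrib, ← mul_sum, sum_const, card_univ, nsmul_eq_mul]
    rw [sum_comm]
    simp only [← sum_mul, hsum', mul_assoc, ← mul_sum, ← sq, hw']
    ring
  funext t
  have hdist_i := (sum_eq_zero_iff_of_nonneg fun _ _ => sum_nonneg fun _ _ => sq_nonneg _).1 hdist i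
    (mem_univ _)
  have hdist_it := (sum_eq_zero_iff_of_nonneg fun _ _ => sq_nonneg _).1 hdist_i t (mem_univ _)
  exact_mod_cast sub_eq_zero.1 (pow_eq_zero_iff two_ne_zero |>.1 hdist_it)

theorem map_lt_pow {B : ℕ} {x : Fin n → ℕ} (hx : ∀ i, x i < B) : map B x < B ^ n := by
  induction n with
  | zero => simp
  | succ n ih =>
    have htail : map B (x ∘ Fin.succ) + 1 ≤ B ^ n := ih fun i => hx i.succ
    calc map B x = x 0 + map B (x ∘ Fin.succ) * B := map_succ' x
      _ < B + map B (x ∘ Fin.succ) * B := by have := hx 0; omega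
      _ = (map B (x ∘ Fin.succ) + 1) * B := by ring
      _ ≤ B ^ (n + 1) := by rw [pow_succ]; exact Nat.mul_le_mul_right B htail

theorem sum_map_eq_mul_map_iff {m B : ℕ} (hB : m * d < B) {v : Fin m → Fin n → ℕ}
    {w : Fin n → ℕ} (hv : ∀ i, v i ∈ sphere n d r) (hw : w ∈ sphere n d r) :
    ∑ i, map B (v i) = m * map B w ↔ ∀ i, v i = w := by
  refine ⟨fun h => ?_, fun h => by simp [h]⟩
  have hbox {x} (hx : x ∈ sphere n d r) (t : Fin n) : x t < d :=
    mem_box.1 (sphere_subset_box hx) t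
  have hsum_lt : ∀ t, (∑ i, v i) t < B := fun t =>
    calc (∑ i, v i) t = ∑ i, v i t := Finset.sum_apply t _ _
      _ ≤ ∑ _i : Fin m, d := sum_le_sum fun i _ => (hbox (hv i) t).le
      _ < B := by simpa using hB
  have hnsmul_lt : ∀ t, (m • w) t < B := fun t =>
    (Nat.mul_le_mul_left m (hbox hw t).le).trans_lt hB
  have hmap : map B (∑ i, v i) = map B (m • w) := by rw [map_sum, map_nsmul, h, smul_eq_mul]
  exact eq_of_sum_eq_card_nsmul hv hw (by simpa using map_injOn hsum_lt hnsmul_lt hmap)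

theorem exists_isColoredSumFree {P m : ℕ} (hd : 0 < d) (hP : (m + 1) * ((m + 1) * d) ^ n ≤ P) :
    ∃ y : Fin (m + 1) → Fin #(sphere n d r) → ZMod P, IsColoredSumFree y := by
  set B := (m + 1) * d
  have hB : m * d < B := by simp only [B]; nlinarith
  let a (j : Fin #(sphere n d r)) : Fin n → ℕ := (sphere n d r).equivFin.symm j
  have ha : Function.Injective a := Subtype.val_injective.comp (Equiv.injective _)
  have has (j) : a j ∈ sphere n d r := ((sphere n d r).equivFin.symm j).2
  have hmap_lt (j) : map B (a j) < B ^ n :=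
    map_lt_pow fun t => (mem_box.1 (sphere_subset_box (has j)) t).trans_le
      (Nat.le_mul_of_pos_left d m.succ_pos)
  refine ⟨Fin.lastCases (fun j => -(m * map B (a j) : ZMod P)) fun _ j => map B (a j),
    fun j => ?_⟩
  have hmBn : m * B ^ n < P :=
    ((Nat.mul_lt_mul_right (pow_pos ((Nat.zero_le _).trans_lt hB) n)).2 m.lt_succ_self).trans_le hP
  have hlhs : ∑ i : Fin m, map B (a (j i.castSucc)) < P :=
    calc ∑ i : Fin m, map B (a (j i.castSucc)) ≤ ∑ _i : Fin m, B ^ n :=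
          sum_le_sum fun i _ => (hmap_lt _).le
      _ = m * B ^ n := by simp
      _ < P := hmBn
  have hrhs : m * map B (a (j (Fin.last m))) < P :=
    (Nat.mul_le_mul_left m (hmap_lt _).le).trans_lt hmBn
  simp only [Fin.sum_univ_castSucc, Fin.lastCases_castSucc, Fin.lastCases_last, ← Nat.cast_sum,
    ← Nat.cast_mul, ← sub_eq_add_neg, sub_eq_zero]
  rw [ZMod.natCast_eq_natCast_iff', Nat.mod_eq_of_lt hlhs, Nat.mod_eq_of_lt hrhs,
    sum_map_eq_mul_map_iff hB (fun i => has _) (has _)]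
  simp only [ha.eq_iff]
  exact ⟨fun h => ⟨j (Fin.last m), Fin.lastCases rfl h⟩,
    fun ⟨c, hc⟩ i => (hc _).trans (hc _).symm⟩

end Behrend

theorem Nat.exists_pos_mul_pow_le_lt_mul_two_mul_pow {c P n : ℕ} (hn : n ≠ 0) (hc : 0 < c)
    (hcP : c ≤ P) : ∃ d, 0 < d ∧ c * d ^ n ≤ P ∧ P < c * (2 * d) ^ n := by
  set d := nthRoot n (P / c)
  have hd : 0 < d := (le_nthRoot_iff hn).2 (by simpa using (Nat.one_le_div_iff hc).2 hcP)
  refine ⟨d, hd, ?_, ?_⟩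
  · calc c * d ^ n ≤ c * (P / c) := Nat.mul_le_mul_left c (pow_nthRoot_le_iff.2 (.inl hn))
      _ ≤ P := Nat.mul_div_le P c
  · calc P < c * (P / c + 1) := Nat.lt_mul_div_succ P hc
      _ ≤ c * (d + 1) ^ n := Nat.mul_le_mul_left c (lt_pow_nthRoot_add_one hn _)
      _ ≤ c * (2 * d) ^ n := by gcongr; omega

theorem behrend_exponent_le {l t D : ℝ} {n : ℕ} (hl : 1 ≤ l) (ht : 12 ≤ t) (htn : t ≤ n)
    (hnt : n < t + 1) (hD : n * D ≤ t ^ 2 * l) : (n + 1) * l + 2 * n + 2 * D ≤ 12 * (t * l) := by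
  have hDt : D ≤ t * l := by
    by_contra! h
    nlinarith [mul_lt_mul_of_pos_left h (show (0 : ℝ) < n by linarith),
      mul_nonneg (mul_nonneg (sub_nonneg.2 htn) (by linarith : (0 : ℝ) ≤ t)) (by linarith : 0 ≤ l)]
  nlinarith

theorem natCast_mul_exp_le_of_mul_pow_le_lt {P k n d : ℕ} {t : ℝ} (hl : 1 ≤ log k) (ht : 12 ≤ t)
    (htn : t ≤ n) (hnt : n < t + 1) (hLt : log P = t ^ 2 * log k) (hd : 0 < d)
    (hdP : k ^ (n + 1) * d ^ n ≤ P) (hPd : P < k ^ (n + 1) * (2 * d) ^ n) :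
    P * exp (-12 * (t * log k)) ≤ ((d ^ n : ℕ) / (n * d ^ 2 : ℕ) : ℝ) := by
  have hk : 0 < k := Nat.pos_of_ne_zero <| by rintro rfl; norm_num at hl
  have hn : (0 : ℝ) < n := by linarith
  have hn₀ : 0 < n := by exact_mod_cast hn
  have hP : (0 : ℝ) < P := by exact_mod_cast (by positivity : 0 < k ^ (n + 1) * d ^ n).trans_le hdP
  have hd' : (0 : ℝ) < d := by exact_mod_cast hd
  have hupper : log P < (n + 1) * log k + n * (log 2 + log d) := by
    have : (P : ℝ) < k ^ (n + 1) * (2 * d) ^ n := by exact_mod_cast hPd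
    rw [← log_lt_log_iff hP (by positivity), log_mul (by positivity) (by positivity), log_pow,
      log_pow, log_mul (by norm_num) hd'.ne'] at this
    push_cast at this
    exact this
  have hlower : n * log d ≤ log P := by
    have : ((d : ℝ) ^ n) ≤ P := by
      exact_mod_cast (Nat.le_mul_of_pos_left _ (by positivity)).trans hdP
    rwa [← log_le_log_iff (by positivity) hP, log_pow] at this
  have hexp := behrend_exponent_le hl ht htn hnt (hLt ▸ hlower)
  have hlog2 : log 2 ≤ 1 := by linarith [log_two_lt_d9]
  rw [← log_le_log_iff (by positivity) (by positivity), log_mul hP.ne' (by positivity), log_exp,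
    log_div (by positivity) (by positivity)]
  push_cast
  rw [log_pow, log_mul hn.ne' (by positivity), log_pow]
  push_cast
  linarith [log_le_self hn.le, mul_le_mul_of_nonneg_left hlog2 hn.le]

theorem exists_behrend_parameters {P k : ℕ} (hk : 3 ≤ k) (hPk : 144 * log k < log P) :
    ∃ n d : ℕ, 0 < d ∧ k * (k * d) ^ n ≤ P ∧
      P * exp (-12 * √(log P * log k)) ≤ ((d ^ n : ℕ) / (n * d ^ 2 : ℕ) : ℝ) := by
  set l := log k
  set L := log P
  have hl : 1 ≤ l := by
    have : (3 : ℝ) ≤ k := by exact_mod_cast hk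
    have : exp 1 < k := by linarith [exp_one_lt_d9]
    exact (lt_log_iff_exp_lt (by linarith)).2 this |>.le
  have hP : (0 : ℝ) < P := by
    have : P ≠ 0 := by rintro rfl; simp [L] at hPk; linarith
    positivity
  set t := √(L / l)
  have ht : 12 ≤ t := by
    rw [le_sqrt' (by norm_num), le_div_iff₀ (by linarith)]; linarith
  have hLt : L = t ^ 2 * l := by
    rw [sq_sqrt (div_nonneg (by linarith) (by linarith)), div_mul_cancel₀ _ (by linarith)]
  have hs : √(L * l) = t * l := by
    rw [hLt, show t ^ 2 * l * l = (t * l) ^ 2 by ring, sqrt_sq (by nlinarith)]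
  set n := ⌈t⌉₊
  have htn : t ≤ n := Nat.le_ceil t
  have hnt : (n : ℝ) < t + 1 := Nat.ceil_lt_add_one (by linarith)
  have hkP : k ^ (n + 1) ≤ P := by
    have : log ((k : ℝ) ^ (n + 1)) ≤ L := by
      rw [log_pow, Nat.cast_succ, hLt]
      exact mul_le_mul_of_nonneg_right (by nlinarith) (by linarith)
    exact_mod_cast (log_le_log_iff (by positivity) hP).1 this
  obtain ⟨d, hd, hdP, hPd⟩ := Nat.exists_pos_mul_pow_le_lt_mul_two_mul_pow
    (Nat.ceil_pos.2 (by linarith : 0 < t)).ne' (by positivity) hkP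
  refine ⟨n, d, hd, by rwa [show k * (k * d) ^ n = k ^ (n + 1) * d ^ n by ring], ?_⟩
  rw [hs]
  exact natCast_mul_exp_le_of_mul_pow_le_lt hl ht htn hnt hLt hd hdP hPd

theorem natCast_mul_exp_neg_le_one {P k : ℕ} (hPk : log P ≤ 144 * log k) :
    P * exp (-12 * √(log P * log k)) ≤ 1 := by
  rcases P.eq_zero_or_pos with rfl | hP
  · simp
  have hL : 0 ≤ log P := log_natCast_nonneg P
  have hs := sq_sqrt (mul_nonneg hL (log_natCast_nonneg k))
  have hLs : log P ≤ 12 * √(log P * log k) := by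
    nlinarith [sqrt_nonneg (log P * log k)]
  calc P * exp (-12 * √(log P * log k)) ≤ P * exp (-log P) := by gcongr; linarith
    _ = 1 := by rw [exp_neg, exp_log (by positivity), mul_inv_cancel₀ (by positivity)]

theorem stmt9_general (P k : ℕ) (hk : 3 ≤ k) :
    ∃ (R : ℕ) (y : Fin k → Fin R → ZMod P),
      (∀ j : Fin k → Fin R, ∑ i, y i (j i) = 0 ↔ ∃ c, ∀ i, j i = c) ∧
      (P : ℝ) * Real.exp (-12 * Real.sqrt (Real.log P * Real.log k)) ≤ R := by
  by_cases hsmall : log P ≤ 144 * log k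
  · exact ⟨1, 0, isColoredSumFree_zero_fin_one, by simpa using natCast_mul_exp_neg_le_one hsmall⟩
  obtain ⟨n, d, hd, hdP, hbound⟩ := exists_behrend_parameters hk (not_le.1 hsmall)
  obtain ⟨r, hr⟩ := Behrend.exists_large_sphere n d
  obtain ⟨m, rfl⟩ : ∃ m, k = m + 1 := ⟨k - 1, by omega⟩
  obtain ⟨y, hy⟩ := Behrend.exists_isColoredSumFree (r := r) hd hdP
  exact ⟨_, y, hy, hbound.trans hr⟩

theorem stmt9 (P k : ℕ) (hP : P.Prime) (hk : 3 ≤ k) (hkP : k ≤ P) :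
    ∃ (R : ℕ) (y : Fin k → Fin R → ZMod P),
      (∀ j : Fin k → Fin R, ∑ i, y i (j i) = 0 ↔ ∃ c, ∀ i, j i = c) ∧
      (P : ℝ) * Real.exp (-12 * Real.sqrt (Real.log P * Real.log k)) ≤ R :=
  stmt9_general P k hk
end

section
/- Let n ≥ 0 and k ≥ 3 be integers and let ψ be a non-zero scaled distribution on {0,…,n} (a function ψ : {0,…,n} → ℝ≥0). Let ψ̄ be the normalized probability distribution ψ̄(i) = ψ(i)/Σ_j ψ(j). Then the following are equivalent: (1) ψ is a positive linear combination of all n-simple scaled distributions 1_{a_1} + … + 1_{a_k} over all (a_1,…,a_k) ∈ T_{n,k}; (2) ψ̄ occurs as the marginal of an S_k-symmetric probability distribution τ on T_{n,k} with τ(t) > 0 for all t ∈ T_{n,k}. -/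
/-!
Summing a positive weight `λ` on `T_{n,k}` over `S_k` multiplies
`∑_t λ_t (1_{t_1} + … + 1_{t_k})` by `k!`, so `λ` may be taken symmetric. For a symmetric weight
all coordinate marginals coincide, and `∑_t λ_t · #{i | t_i = x}` is `k` times the common
marginal at `x`. After rescaling, positive symmetric weights representing `ψ` and positive
symmetric distributions with marginal `ψ̄` are therefore the same thing.
-/

open Finset

namespace WeakComposition

variable {n k : ℕ}

abbrev T (n k : ℕ) := {a : Fin k → Fin (n + 1) // ∑ i, (a i : ℕ) = n}

def precomp (σ : Equiv.Perm (Fin k)) : T n k ≃ T n k where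
  toFun t := ⟨t.1 ∘ σ, (Equiv.sum_comp σ fun i => (t.1 i : ℕ)).trans t.2⟩
  invFun t := ⟨t.1 ∘ σ.symm, (Equiv.sum_comp σ.symm fun i => (t.1 i : ℕ)).trans t.2⟩
  left_inv t := Subtype.ext <| funext fun i => by simp
  right_inv t := Subtype.ext <| funext fun i => by simp

@[simp]
lemma precomp_apply_coe (σ : Equiv.Perm (Fin k)) (t : T n k) : (precomp σ t).1 = t.1 ∘ σ := rfl

lemma precomp_precomp (σ ρ : Equiv.Perm (Fin k)) (t : T n k) :
    precomp σ (precomp ρ t) = precomp (ρ * σ) t := rfl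

lemma card_filter_precomp_eq (σ : Equiv.Perm (Fin k)) (t : T n k) (x : Fin (n + 1)) :
    #{i | (precomp σ t).1 i = x} = #{i | t.1 i = x} :=
  card_equiv σ fun i => by rw [mem_filter, mem_filter]; simp

def marginal (f : T n k → ℝ) (i : Fin k) (x : Fin (n + 1)) : ℝ :=
  ∑ t with t.1 i = x, f t

lemma sum_mul_card_eq_sum_marginal (f : T n k → ℝ) (x : Fin (n + 1)) :
    ∑ t, f t * #{i | t.1 i = x} = ∑ i, marginal f i x := by
  simp_rw [marginal, natCast_card_filter, mul_sum, sum_filter]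
  rw [sum_comm]
  simp

lemma sum_marginal (f : T n k → ℝ) (i : Fin k) : ∑ x, marginal f i x = ∑ t, f t := by
  rw [← sum_fiberwise univ (fun t => t.1 i) f]
  rfl

lemma marginal_eq_of_precomp_invariant {f : T n k → ℝ}
    (hf : ∀ σ t, f (precomp σ t) = f t) (i j : Fin k) (x : Fin (n + 1)) :
    marginal f i x = marginal f j x := by
  refine sum_equiv (precomp (Equiv.swap i j)) (fun t => ?_) fun t _ => (hf _ t).symm
  simp only [mem_filter, mem_univ, true_and, precomp_apply_coe, Function.comp_apply,
    Equiv.swap_apply_right]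

lemma sum_mul_card_eq_mul_marginal {f : T n k → ℝ} (hf : ∀ σ t, f (precomp σ t) = f t)
    (i : Fin k) (x : Fin (n + 1)) :
    ∑ t, f t * #{i | t.1 i = x} = k * marginal f i x := by
  rw [sum_mul_card_eq_sum_marginal,
    sum_congr rfl fun j _ => marginal_eq_of_precomp_invariant hf j i x,
    sum_const, card_univ, Fintype.card_fin, nsmul_eq_mul]

def symmetrize (f : T n k → ℝ) (t : T n k) : ℝ :=
  ∑ σ : Equiv.Perm (Fin k), f (precomp σ t)

lemma symmetrize_precomp (f : T n k → ℝ) (σ : Equiv.Perm (Fin k)) (t : T n k) :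
    symmetrize f (precomp σ t) = symmetrize f t := by
  simp_rw [symmetrize, precomp_precomp]
  exact Equiv.sum_comp (Equiv.mulLeft σ) fun ρ => f (precomp ρ t)

lemma symmetrize_pos {f : T n k → ℝ} (hf : ∀ t, 0 < f t) (t : T n k) : 0 < symmetrize f t :=
  sum_pos (fun _ _ => hf _) univ_nonempty

lemma sum_symmetrize_mul_card (f : T n k → ℝ) (x : Fin (n + 1)) :
    ∑ t, symmetrize f t * #{i | t.1 i = x} = k.factorial * ∑ t, f t * #{i | t.1 i = x} := by
  have horbit (σ : Equiv.Perm (Fin k)) :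
      ∑ t, f (precomp σ t) * #{i | t.1 i = x} = ∑ t, f t * #{i | t.1 i = x} := by
    conv_lhs => enter [2, t]; rw [← card_filter_precomp_eq σ t x]
    exact Equiv.sum_comp (precomp σ) fun t => f t * #{i | t.1 i = x}
  simp_rw [symmetrize, sum_mul]
  rw [sum_comm, sum_congr rfl fun σ _ => horbit σ, sum_const, card_univ, Fintype.card_perm,
    Fintype.card_fin, nsmul_eq_mul]

theorem exists_symmetric_of_eq_sum_mul_card (hk : 0 < k) {ψ : Fin (n + 1) → ℝ}
    (hS : 0 < ∑ y, ψ y) {f : T n k → ℝ} (hf : ∀ t, 0 < f t)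
    (hψ : ∀ x, ψ x = ∑ t, f t * #{i | t.1 i = x}) :
    ∃ τ : T n k → ℝ, (∀ t, 0 < τ t) ∧ (∑ t, τ t = 1) ∧
      (∀ t t' : T n k, (∃ σ : Equiv.Perm (Fin k), t'.1 = t.1 ∘ σ) → τ t' = τ t) ∧
      ∀ i x, ψ x / ∑ y, ψ y = marginal τ i x := by
  have hmarg (i x) : k * marginal (symmetrize f) i x = k.factorial * ψ x := by
    rw [← sum_mul_card_eq_mul_marginal (symmetrize_precomp f), sum_symmetrize_mul_card, ← hψ]
  have htotal : k * ∑ t, symmetrize f t = k.factorial * ∑ y, ψ y := by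
    rw [← sum_marginal _ ⟨0, hk⟩, mul_sum, mul_sum]
    exact sum_congr rfl fun x _ => hmarg _ x
  have hfact : (0 : ℝ) < k.factorial := mod_cast k.factorial_pos
  refine ⟨fun t => k * symmetrize f t / (k.factorial * ∑ y, ψ y),
    fun t => by have := symmetrize_pos hf t; positivity,
    by rw [← sum_div, ← mul_sum, htotal, div_self (by positivity)], ?_, fun i x => ?_⟩
  · rintro t t' ⟨σ, hσ⟩
    simp only [show t' = precomp σ t from Subtype.ext hσ, symmetrize_precomp]
  · rw [marginal, ← sum_div, ← mul_sum, ← marginal, hmarg, mul_div_mul_left _ _ hfact.ne']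

theorem eq_sum_mul_card_of_marginal_eq (hk : 0 < k) {ψ : Fin (n + 1) → ℝ}
    (hS : 0 < ∑ y, ψ y) {τ : T n k → ℝ} (hτ : ∀ t, 0 < τ t)
    (hmarg : ∀ i x, ψ x / ∑ y, ψ y = marginal τ i x) :
    ∃ f : T n k → ℝ, (∀ t, 0 < f t) ∧ ∀ x, ψ x = ∑ t, f t * #{i | t.1 i = x} := by
  refine ⟨fun t => (∑ y, ψ y) / k * τ t, fun t => by have := hτ t; positivity, fun x => ?_⟩
  simp_rw [mul_assoc, ← mul_sum, sum_mul_card_eq_sum_marginal, ← hmarg, sum_const, card_univ,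
    Fintype.card_fin, nsmul_eq_mul]
  have : (k : ℝ) ≠ 0 := by positivity
  field_simp

end WeakComposition

open WeakComposition in
theorem stmt11 (n k : ℕ) (hk : 3 ≤ k)
    (ψ : Fin (n + 1) → ℝ) (hψ : ∀ x, 0 ≤ ψ x) (hψ0 : ψ ≠ 0) :
    (∃ lam : {a : Fin k → Fin (n + 1) // ∑ i, (a i : ℕ) = n} → ℝ,
      (∀ t, 0 < lam t) ∧
      ∀ x, ψ x = ∑ t, lam t * ((Finset.univ.filter (fun i => t.1 i = x)).card : ℝ)) ↔
    (∃ τ : {a : Fin k → Fin (n + 1) // ∑ i, (a i : ℕ) = n} → ℝ,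
      (∀ t, 0 < τ t) ∧ (∑ t, τ t = 1) ∧
      (∀ t t' : {a : Fin k → Fin (n + 1) // ∑ i, (a i : ℕ) = n},
        (∃ σ : Equiv.Perm (Fin k), t'.1 = t.1 ∘ σ) → τ t' = τ t) ∧
      ∀ (i : Fin k) (x : Fin (n + 1)),
        ψ x / (∑ y, ψ y) = ∑ t ∈ Finset.univ.filter
          (fun t : {a : Fin k → Fin (n + 1) // ∑ i, (a i : ℕ) = n} => t.1 i = x), τ t) := by
  have hk0 : 0 < k := by omega
  have hS : 0 < ∑ y, ψ y := by
    obtain ⟨x, hx⟩ := Function.ne_iff.mp hψ0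
    exact sum_pos' (fun y _ => hψ y) ⟨x, mem_univ x, (hψ x).lt_of_ne' hx⟩
  constructor
  · rintro ⟨f, hf, hψf⟩
    exact exists_symmetric_of_eq_sum_mul_card hk0 hS hf hψf
  · rintro ⟨τ, hτ, -, -, hmarg⟩
    exact eq_sum_mul_card_of_marginal_eq hk0 hS hτ hmarg
end

section
/- Let k ≥ 3 and n ≥ 2k, and let φ be an n-tame scaled distribution on {0,…,n} satisfying φ(0) = (k−1)φ(n) + (k−2)φ(n−1) + … + φ(n−k+2). Then φ(1) ≥ φ(n−1) + 2φ(n−2) + … + (k−2)φ(n−k+2) + (k−1)φ(n−k+1) + (k−2)φ(n−k) + … + φ(n−2k+3). -/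
/-!
Everything is linear in `φ`, so the theorem follows from a nonnegative combination of the
hypotheses. Let `T` be the left-hand side of the conclusion, `m = n / k`, `M = ⌈n / k⌉`,
`n = k m + e` and `R = e (k - e)`. The functional

  `2n(n-k) (φ 1 - T) + 4k (k ∑ i φ i - n ∑ φ i) + 4kn (φ 0 - ∑ j φ (n-k+1+j))`
  `  - 2R (φ (m-1) + φ M - 2 φ m)`

has coefficient partial sums `Wᵢ` with `W₀ = Wₙ = 0`, so by Abel summation it equals
`∑ Wᵢ (φ i - φ (i+1))`, and it suffices that `Wᵢ ≥ 0` for `0 < i < n`. Up to `n - 2k + 2`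
the weight is `2 (n - k i) (n - k (i+1))` plus the convexity correction. The product is
negative only at `i = m` (when `k ∤ n`), where it equals `-2R`; the correction moves this defect
to `i = m - 1`, where the product is `2e(e+k) ≥ 2R`. Beyond `n - 2k + 2` the weight is a
concave quadratic in `i` up to `n - k + 1`, nonnegative at both ends, and
`(n-2k)(n-k)(n-i)(n-i-1)` after it.
-/

open Finset

theorem sum_mul_nonneg_of_partial_sums_nonneg {n : ℕ} {u φ : ℕ → ℝ} (hu : u 0 = 0)
    (hpartial : ∀ i, 1 ≤ i → i < n → 0 ≤ ∑ j ∈ range (i + 1), u j)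
    (htotal : ∑ j ∈ range (n + 1), u j = 0)
    (hφ : ∀ i, 1 ≤ i → i < n → φ (i + 1) ≤ φ i) :
    0 ≤ ∑ i ∈ range (n + 1), u i * φ i := by
  have hparts := sum_range_by_parts φ u (n + 1)
  simp only [smul_eq_mul, add_tsub_cancel_right, htotal, mul_zero, zero_sub] at hparts
  rw [sum_congr rfl fun i _ => mul_comm (u i) (φ i), hparts, neg_nonneg]
  refine sum_nonpos fun i hi => ?_
  rcases Nat.eq_zero_or_pos i with rfl | hi₁
  · simp [hu]
  · exact mul_nonpos_of_nonpos_of_nonneg (by linarith [hφ i hi₁ (mem_range.1 hi)])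
      (hpartial i hi₁ (mem_range.1 hi))

-- From here on the truncated subtraction `((i - c : ℕ) : ℝ)` is used on purpose, as the
-- positive part `(i - c)⁺`.

theorem sum_range_succ_cast_tsub (c i : ℕ) :
    ∑ j ∈ range (i + 1), ((j - c : ℕ) : ℝ) = (i - c : ℕ) * ((i - c : ℕ) + 1) / 2 := by
  induction i with
  | zero => simp
  | succ i ih =>
    rw [sum_range_succ, ih]
    rcases Nat.lt_or_ge i c with h | h
    · rw [Nat.sub_eq_zero_of_le h.le, Nat.sub_eq_zero_of_le h]
      simp
    · rw [Nat.sub_add_comm h]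
      push_cast
      ring

theorem sum_range_cast_tsub_mul (c L : ℕ) (φ : ℕ → ℝ) :
    ∑ i ∈ range (c + L + 1), ((i - c : ℕ) : ℝ) * φ i =
      ∑ j ∈ range L, (j + 1) * φ (c + 1 + j) := by
  rw [add_right_comm, sum_range_add, sum_eq_zero fun i hi => ?_, zero_add]
  · refine sum_congr rfl fun j _ => ?_
    rw [show c + 1 + j - c = j + 1 by omega]
    push_cast
    ring
  · rw [Nat.sub_eq_zero_of_le (by simp at hi; omega)]
    simp

theorem sum_Icc_one_eq_sum_range (f : ℕ → ℝ) (L : ℕ) :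
    ∑ j ∈ Icc 1 L, f j = ∑ j ∈ range L, f (j + 1) := by
  rw [← Ico_add_one_right_eq_Icc, sum_Ico_eq_sum_range, add_tsub_cancel_right]
  simp only [add_comm]

theorem sum_Icc_mul_eq_sum_range_tsub {n k : ℕ} (hk : 1 ≤ k) (hn : k ≤ n) (φ : ℕ → ℝ) :
    ∑ j ∈ Icc 1 (k - 1), (j : ℝ) * φ (n - k + 1 + j) =
      ∑ i ∈ range (n + 1), ((i - (n - k + 1) : ℕ) : ℝ) * φ i := by
  rw [show n + 1 = n - k + 1 + (k - 1) + 1 by omega, sum_range_cast_tsub_mul,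
    sum_Icc_one_eq_sum_range]
  refine sum_congr rfl fun j _ => ?_
  rw [show n - k + 1 + 1 + j = n - k + 1 + (j + 1) by omega]
  push_cast
  ring

/-- The two sums of the conclusion together form a tent of height `k - 1` on
`[n - 2k + 2, n]`. -/
theorem sum_tent_eq {n k : ℕ} (hk : 2 ≤ k) (hn : 2 * k ≤ n) (φ : ℕ → ℝ) :
    (∑ j ∈ Icc 1 (k - 2), (j : ℝ) * φ (n - j)) +
        ∑ j ∈ range (k - 1), ((k : ℝ) - 1 - j) * φ (n - k + 1 - j) =
      ∑ i ∈ range (n + 1), ((i - (n - 2 * k + 2) : ℕ) : ℝ) * φ i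
        - 2 * ∑ i ∈ range (n + 1), ((i - (n - k + 1) : ℕ) : ℝ) * φ i := by
  obtain ⟨K, rfl⟩ := Nat.exists_eq_add_of_le hk
  obtain ⟨p, rfl⟩ := Nat.exists_eq_add_of_le hn
  have hlower : ∑ i ∈ range (2 * (2 + K) + p + 1),
        ((i - (2 * (2 + K) + p - 2 * (2 + K) + 2) : ℕ) : ℝ) * φ i =
      ∑ j ∈ range (K + 1), (j + 1) * φ (p + 3 + j)
        + ∑ j ∈ range (K + 1), (K + 2 + j) * φ (K + p + 4 + j) := by
    rw [show 2 * (2 + K) + p - 2 * (2 + K) + 2 = p + 2 by omega,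
      show 2 * (2 + K) + p + 1 = p + 2 + ((K + 1) + (K + 1)) + 1 by omega,
      sum_range_cast_tsub_mul, sum_range_add]
    congr 1
    refine sum_congr rfl fun j _ => ?_
    rw [show p + 2 + 1 + (K + 1 + j) = K + p + 4 + j by omega]
    push_cast
    ring
  have hupper : ∑ i ∈ range (2 * (2 + K) + p + 1),
        ((i - (2 * (2 + K) + p - (2 + K) + 1) : ℕ) : ℝ) * φ i =
      ∑ j ∈ range (K + 1), (j + 1) * φ (K + p + 4 + j) := by
    rw [show 2 * (2 + K) + p - (2 + K) + 1 = K + p + 3 by omega,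
      show 2 * (2 + K) + p + 1 = K + p + 3 + (K + 1) + 1 by omega, sum_range_cast_tsub_mul]
  have hfirst : ∑ j ∈ Icc 1 (2 + K - 2), (j : ℝ) * φ (2 * (2 + K) + p - j) =
      ∑ j ∈ range (K + 1), ((K : ℝ) - j) * φ (K + p + 4 + j) := by
    rw [sum_range_succ, sub_self, zero_mul, add_zero, show 2 + K - 2 = K by omega,
      sum_Icc_one_eq_sum_range, ← sum_range_reflect]
    refine sum_congr rfl fun j hj => ?_
    rw [mem_range] at hj
    rw [show K - 1 - j + 1 = K - j by omega,
      show 2 * (2 + K) + p - (K - j) = K + p + 4 + j by omega, Nat.cast_sub hj.le]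
  have hsecond : ∑ j ∈ range (2 + K - 1),
        (((2 + K : ℕ) : ℝ) - 1 - j) * φ (2 * (2 + K) + p - (2 + K) + 1 - j) =
      ∑ j ∈ range (K + 1), (j + 1) * φ (p + 3 + j) := by
    rw [show 2 + K - 1 = K + 1 by omega, ← sum_range_reflect]
    refine sum_congr rfl fun j hj => ?_
    rw [mem_range] at hj
    rw [show 2 * (2 + K) + p - (2 + K) + 1 - (K + 1 - 1 - j) = p + 3 + j by omega,
      Nat.cast_sub (by omega), Nat.cast_sub (by omega)]
    push_cast
    ring
  rw [hlower, hupper, hfirst, hsecond, mul_sum, add_sub_assoc, ← sum_sub_distrib, add_comm]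
  congr 1
  exact sum_congr rfl fun j _ => by ring

theorem cast_tsub_tsub_add {n c d i : ℕ} (hc : c ≤ n) (hi : n - c + d ≤ i) :
    ((i - (n - c + d) : ℕ) : ℝ) = i - n + c - d := by
  rw [Nat.cast_sub hi, Nat.cast_add, Nat.cast_sub hc]
  ring

theorem add_pred_div_eq {n k m : ℕ} (hm₁ : k * m ≤ n) (hm₂ : n < k * (m + 1)) :
    (n + k - 1) / k = m + 1 ∨ (n + k - 1) / k = m ∧ k * m = n := by
  rw [mul_add, mul_one] at hm₂
  by_cases h : k * m = n
  · exact Or.inr ⟨Nat.div_eq_of_lt_le (by rw [mul_comm]; omega)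
      (by rw [add_mul, one_mul, mul_comm]; omega), h⟩
  · exact Or.inl (Nat.div_eq_of_lt_le (by rw [add_mul, one_mul, mul_comm]; omega)
      (by rw [add_mul, add_mul, one_mul, mul_comm]; omega))

noncomputable def certCoeff (n k m M : ℕ) (R : ℝ) (i : ℕ) : ℝ :=
  2 * n * (n - k) * ((if i = 1 then 1 else 0) - ((i - (n - 2 * k + 2) : ℕ) : ℝ)
      + 2 * ((i - (n - k + 1) : ℕ) : ℝ))
    + 4 * k * (k * i - n)
    + 4 * k * n * ((if i = 0 then 1 else 0) - ((i - (n - k + 1) : ℕ) : ℝ))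
    - 2 * R * ((if i = m - 1 then 1 else 0) + (if i = M then 1 else 0)
      - 2 * (if i = m then 1 else 0))

/-- The partial sums of `certCoeff n k m M 0` from `i = 1` on. -/
noncomputable def quadWeight (n k i : ℕ) : ℝ :=
  2 * (n - k * i) * (n - k * i - k)
    - n * (n - k) * ((i - (n - 2 * k + 2) : ℕ) : ℝ) * (((i - (n - 2 * k + 2) : ℕ) : ℝ) + 1)
    + 2 * n * (n - 2 * k) * ((i - (n - k + 1) : ℕ) : ℝ) * (((i - (n - k + 1) : ℕ) : ℝ) + 1)

noncomputable def certWeight (n k m M : ℕ) (R : ℝ) (i : ℕ) : ℝ :=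
  quadWeight n k i
    - 2 * R * ((if m - 1 ≤ i then 1 else 0) + (if M ≤ i then 1 else 0)
      - 2 * (if m ≤ i then 1 else 0))

section QuadWeight

variable {n k i : ℕ}

theorem quadWeight_eq_of_le (hk : 1 ≤ k) (hn : 2 * k ≤ n) (hi : i ≤ n - 2 * k + 2) :
    quadWeight n k i = 2 * (n - k * i) * (n - k * i - k) := by
  rw [quadWeight, Nat.sub_eq_zero_of_le hi, Nat.sub_eq_zero_of_le (by omega)]
  simp

theorem quadWeight_eq_of_mem_Icc (hn : 2 * k ≤ n) (hi₁ : n - 2 * k + 2 ≤ i)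
    (hi₂ : i ≤ n - k + 1) :
    quadWeight n k i = (n - 2 * k) * (2 * (n - k + 1 - i) * ((k - 1) * (n - 2 * k) + k)
      + (i - n + 2 * k - 2) * (n - k) * (k - 2)
      + (n + k) * (i - n + 2 * k - 2) * (n - k + 1 - i)) := by
  rw [quadWeight, cast_tsub_tsub_add hn hi₁, Nat.sub_eq_zero_of_le hi₂]
  push_cast
  ring

theorem quadWeight_eq_of_ge (hk : 1 ≤ k) (hn : 2 * k ≤ n) (hi : n - k + 1 ≤ i) :
    quadWeight n k i = (n - 2 * k) * (n - k) * (n - i) * (n - i - 1) := by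
  rw [quadWeight, cast_tsub_tsub_add hn (by omega), cast_tsub_tsub_add (by omega) hi]
  push_cast
  ring

theorem quadWeight_nonneg (hk : 2 ≤ k) (hn : 2 * k ≤ n) (hin : i < n)
    (hi : n ≤ k * i ∨ k * (i + 1) ≤ n) : 0 ≤ quadWeight n k i := by
  have hkR : (2 : ℝ) ≤ k := by exact_mod_cast hk
  have hnR : 2 * (k : ℝ) ≤ n := by exact_mod_cast hn
  have hinR : (i : ℝ) + 1 ≤ n := by exact_mod_cast hin
  rcases le_or_gt i (n - 2 * k + 2) with hI | hI
  · rw [quadWeight_eq_of_le (by omega) hn hI]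
    rcases hi with hi | hi
    · have : (n : ℝ) ≤ k * i := by exact_mod_cast hi
      nlinarith
    · have : (k : ℝ) * (i + 1) ≤ n := by exact_mod_cast hi
      nlinarith
  rcases le_or_gt i (n - k + 1) with hII | hII
  · have h₁ : (n : ℝ) + 2 ≤ i + 2 * k := by exact_mod_cast (by omega : n + 2 ≤ i + 2 * k)
    have h₂ : (i : ℝ) + k ≤ n + 1 := by exact_mod_cast (by omega : i + k ≤ n + 1)
    rw [quadWeight_eq_of_mem_Icc hn hI.le hII]
    have hx : 0 ≤ (i : ℝ) - n + 2 * k - 2 := by linarith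
    have hy : 0 ≤ (n : ℝ) - k + 1 - i := by linarith
    have hc : 0 ≤ ((k : ℝ) - 1) * (n - 2 * k) + k := by nlinarith
    apply mul_nonneg (by linarith)
    nlinarith [mul_nonneg hy hc,
      mul_nonneg (mul_nonneg hx (by linarith : (0 : ℝ) ≤ n - k))
        (by linarith : (0 : ℝ) ≤ k - 2),
      mul_nonneg (mul_nonneg (by linarith : (0 : ℝ) ≤ n + k) hx) hy]
  · rw [quadWeight_eq_of_ge (by omega) hn hII.le]
    apply mul_nonneg (mul_nonneg (mul_nonneg ?_ ?_) ?_) ?_ <;> linarith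

end QuadWeight

section Certificate

variable {n k m M : ℕ} {R : ℝ}

theorem certCoeff_zero (hm : 2 ≤ m) (hM : m ≤ M) :
    certCoeff n k m M R 0 = 0 := by
  rw [certCoeff, if_neg (by omega), if_pos rfl, if_neg (by omega), if_neg (by omega),
    if_neg (by omega)]
  simp

theorem sum_range_certCoeff {i : ℕ} (hi : 1 ≤ i) :
    ∑ j ∈ range (i + 1), certCoeff n k m M R j = certWeight n k m M R i := by
  have hid : ∑ j ∈ range (i + 1), (j : ℝ) = i * (i + 1) / 2 := by
    simpa using sum_range_succ_cast_tsub 0 i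
  simp only [certCoeff, sum_add_distrib, sum_sub_distrib, ← mul_sum, sum_ite_eq', mem_range,
    sum_range_succ_cast_tsub, hid, sum_const, card_range]
  rw [if_pos (by omega), if_pos (by omega)]
  simp only [certWeight, quadWeight, Nat.lt_succ_iff]
  ring

theorem certWeight_self (hk : 1 ≤ k) (hn : 2 * k ≤ n) (hm : m ≤ n)
    (hM : M ≤ n) : certWeight n k m M R n = 0 := by
  rw [certWeight, quadWeight_eq_of_ge hk hn (by omega), if_pos (by omega), if_pos hM, if_pos hm]
  ring

theorem certWeight_nonneg (hk : 2 ≤ k) (hn : 2 * k ≤ n)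
    (hm₁ : k * m ≤ n) (hm₂ : n < k * (m + 1)) (hM : M = m + 1 ∨ M = m ∧ k * m = n)
    (hR : R = (n - k * m) * (k * (m + 1) - n)) {i : ℕ} (hi : 1 ≤ i) (hin : i < n) :
    0 ≤ certWeight n k m M R i := by
  have hmc : m ≤ n - 2 * k + 2 := by
    obtain ⟨p, rfl⟩ := Nat.exists_eq_add_of_le hn
    by_contra h
    have := Nat.mul_le_mul_left k (show p + 3 ≤ m by omega)
    nlinarith
  have hm₁R : (k : ℝ) * m ≤ n := by exact_mod_cast hm₁
  have hm₂R : (n : ℝ) < k * (m + 1) := by exact_mod_cast hm₂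
  obtain h | h | h | h : i + 1 < m ∨ i + 1 = m ∨ m < i ∨ i = m := by omega
  · rw [certWeight, if_neg (by omega), if_neg (by omega), if_neg (by omega)]
    have := Nat.mul_le_mul_left k h.le
    linarith [quadWeight_nonneg hk hn hin (Or.inr (by omega))]
  · rw [certWeight, if_pos (by omega), if_neg (by omega), if_neg (by omega),
      quadWeight_eq_of_le (by omega) hn (by omega), hR]
    have : (i : ℝ) = m - 1 := by rw [← h]; push_cast; ring
    rw [this]
    nlinarith
  · have hMm : M ≤ m + 1 := by rcases hM with h | h <;> omega
    rw [certWeight, if_pos (by omega), if_pos (by omega), if_pos (by omega)]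
    have := Nat.mul_le_mul_left k (by omega : m + 1 ≤ i)
    linarith [quadWeight_nonneg hk hn hin (Or.inl (by omega))]
  · subst h
    rw [certWeight, quadWeight_eq_of_le (by omega) hn hmc, if_pos (by omega), if_pos le_rfl, hR]
    rcases hM with rfl | ⟨rfl, hkm⟩
    · rw [if_neg (by omega)]
      exact le_of_eq (by ring)
    · rw [if_pos le_rfl, ← hkm]
      exact le_of_eq (by push_cast; ring)

theorem sum_certCoeff_mul (φ : ℕ → ℝ) (hn : 1 ≤ n) (hm : m ≤ n)
    (hM : M ≤ n) :
    ∑ i ∈ range (n + 1), certCoeff n k m M R i * φ i =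
      2 * n * (n - k) * (φ 1 - ∑ i ∈ range (n + 1), ((i - (n - 2 * k + 2) : ℕ) : ℝ) * φ i
          + 2 * ∑ i ∈ range (n + 1), ((i - (n - k + 1) : ℕ) : ℝ) * φ i)
        + 4 * k * (k * ∑ i ∈ range (n + 1), (i : ℝ) * φ i
          - n * ∑ i ∈ range (n + 1), φ i)
        + 4 * k * n * (φ 0 - ∑ i ∈ range (n + 1), ((i - (n - k + 1) : ℕ) : ℝ) * φ i)
        - 2 * R * (φ (m - 1) + φ M - 2 * φ m) := by
  simp only [certCoeff, add_mul, sub_mul, sum_add_distrib, sum_sub_distrib, mul_assoc, ← mul_sum,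
    ite_mul, one_mul, zero_mul, sum_ite_eq', mem_range]
  rw [if_pos (by omega), if_pos (by omega), if_pos (by omega), if_pos (by omega), if_pos (by omega)]

theorem bounds_of_floor_ceil (hk : 2 ≤ k) (hn : 2 * k ≤ n) (hm₁ : k * m ≤ n)
    (hm₂ : n < k * (m + 1)) (hM : M = m + 1 ∨ M = m ∧ k * m = n) :
    2 ≤ m ∧ m ≤ M ∧ M ≤ n := by
  have h₂ : k * 2 < k * (m + 1) := by omega
  have := Nat.lt_of_mul_lt_mul_left h₂
  have := Nat.mul_le_mul_right m hk
  rcases hM with h | h <;> omega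

theorem sum_certCoeff_mul_nonneg {φ : ℕ → ℝ} (hk : 2 ≤ k) (hn : 2 * k ≤ n)
    (hm₁ : k * m ≤ n) (hm₂ : n < k * (m + 1)) (hM : M = m + 1 ∨ M = m ∧ k * m = n)
    (hR : R = (n - k * m) * (k * (m + 1) - n))
    (hφ : ∀ i, 1 ≤ i → i < n → φ (i + 1) ≤ φ i) :
    0 ≤ ∑ i ∈ range (n + 1), certCoeff n k m M R i * φ i := by
  obtain ⟨hm, hmM, hMn⟩ := bounds_of_floor_ceil hk hn hm₁ hm₂ hM
  refine sum_mul_nonneg_of_partial_sums_nonneg (certCoeff_zero hm hmM) (fun i hi hin => ?_) ?_ hφ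
  · rw [sum_range_certCoeff hi]
    exact certWeight_nonneg hk hn hm₁ hm₂ hM hR hi hin
  · rw [sum_range_certCoeff (by omega), certWeight_self (by omega) hn (by omega) hMn]

theorem sum_certCoeff_mul_eq {φ : ℕ → ℝ} (hk : 2 ≤ k) (hn : 2 * k ≤ n) (hm : m ≤ n)
    (hM : M ≤ n)
    (hmean : ∑ i ∈ range (n + 1), (i : ℝ) * φ i =
      ((n : ℝ) / k) * ∑ i ∈ range (n + 1), φ i)
    (heq : φ 0 = ∑ j ∈ Icc 1 (k - 1), (j : ℝ) * φ (n - k + 1 + j)) :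
    ∑ i ∈ range (n + 1), certCoeff n k m M R i * φ i =
      2 * n * (n - k) * (φ 1 - ((∑ j ∈ Icc 1 (k - 2), (j : ℝ) * φ (n - j)) +
        ∑ j ∈ range (k - 1), ((k : ℝ) - 1 - j) * φ (n - k + 1 - j)))
        - 2 * R * (φ (m - 1) + φ M - 2 * φ m) := by
  have hbalance : (k : ℝ) * ∑ i ∈ range (n + 1), (i : ℝ) * φ i
      - n * ∑ i ∈ range (n + 1), φ i = 0 := by
    have : (k : ℝ) ≠ 0 := by exact_mod_cast (show k ≠ 0 by omega)
    rw [hmean]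
    field_simp
    ring
  rw [sum_certCoeff_mul φ (by omega) hm hM, hbalance, sum_tent_eq hk hn,
    ← sum_Icc_mul_eq_sum_range_tsub (by omega) (by omega), ← heq]
  ring

end Certificate

theorem stmt13_general (n k : ℕ) (hk : 3 ≤ k) (hn : 2 * k ≤ n)
    (φ : ℕ → ℝ)
    (hmean : ∑ i ∈ Finset.range (n + 1), (i : ℝ) * φ i =
      ((n : ℝ) / k) * ∑ i ∈ Finset.range (n + 1), φ i)
    (hmono : ∀ i j, 1 ≤ i → i ≤ j → j ≤ n → φ j ≤ φ i)
    (heq : φ 0 = ∑ j ∈ Finset.Icc 1 (k - 1), (j : ℝ) * φ (n - k + 1 + j))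
    (hiv : 2 * φ (n / k) ≤ φ (n / k - 1) + φ ((n + k - 1) / k)) :
    (∑ j ∈ Finset.Icc 1 (k - 2), (j : ℝ) * φ (n - j)) +
      (∑ j ∈ Finset.range (k - 1), ((k : ℝ) - 1 - j) * φ (n - k + 1 - j)) ≤ φ 1 := by
  have hk₀ : 0 < k := by omega
  set m := n / k
  set R : ℝ := (n - k * m) * (k * (m + 1) - n)
  have hm₁ : k * m ≤ n := Nat.mul_div_le n k
  have hm₂ : n < k * (m + 1) := Nat.lt_mul_div_succ n hk₀
  have hM := add_pred_div_eq hm₁ hm₂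
  obtain ⟨-, -, hMn⟩ := bounds_of_floor_ceil (by omega) hn hm₁ hm₂ hM
  have hcert := sum_certCoeff_mul_nonneg (R := R) (φ := φ) (by omega) hn hm₁ hm₂ hM rfl
    fun i hi hin => hmono i (i + 1) hi (by omega) hin
  rw [sum_certCoeff_mul_eq (by omega) hn (Nat.div_le_self n k) hMn hmean heq] at hcert
  have hR : 0 ≤ R := by
    have : (k : ℝ) * m ≤ n := by exact_mod_cast hm₁
    have : (n : ℝ) < k * (m + 1) := by exact_mod_cast hm₂
    exact mul_nonneg (by linarith) (by linarith)
  have hconvex := mul_nonneg hR (sub_nonneg.2 hiv)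
  have hscale : (0 : ℝ) < 2 * n * (n - k) := by
    have : (k : ℝ) + 1 ≤ n := by exact_mod_cast (by omega : k + 1 ≤ n)
    have : (0 : ℝ) < k := by exact_mod_cast hk₀
    nlinarith
  exact sub_nonneg.1 (nonneg_of_mul_nonneg_right (by linarith) hscale)

theorem stmt13 (n k : ℕ) (hk : 3 ≤ k) (hn : 2 * k ≤ n)
    (φ : ℕ → ℝ) (hφ : ∀ i ≤ n, 0 ≤ φ i)
    (hmean : ∑ i ∈ Finset.range (n + 1), (i : ℝ) * φ i =
      ((n : ℝ) / k) * ∑ i ∈ Finset.range (n + 1), φ i)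
    (hmono : ∀ i j, 1 ≤ i → i ≤ j → j ≤ n → φ j ≤ φ i)
    (heq : φ 0 = ∑ j ∈ Finset.Icc 1 (k - 1), (j : ℝ) * φ (n - k + 1 + j))
    (hiv : 2 * φ (n / k) ≤ φ (n / k - 1) + φ ((n + k - 1) / k)) :
    (∑ j ∈ Finset.Icc 1 (k - 2), (j : ℝ) * φ (n - j)) +
      (∑ j ∈ Finset.range (k - 1), ((k : ℝ) - 1 - j) * φ (n - k + 1 - j)) ≤ φ 1 :=
  stmt13_general n k hk hn φ hmean hmono heq hiv
end

section
/- Let p be a prime and m = p^ℓ a prime power, and let z_1,…,z_k ∈ ℤ_m. Then over 𝔽_p the identity Σ_{a_1,…,a_k ∈ {0,…,m−1}, a_1+…+a_k ≤ m−1} (−1)^{a_1+…+a_k} C(z_1,a_1)⋯C(z_k,a_k) = 1 if z_1 + … + z_k = 0 in ℤ_m, and = 0 otherwise, holds, where C(z,a) denotes the binomial coefficient binom(z,a) reduced mod p (well-defined on ℤ_m since binom(z,a) ≡ binom(z',a) mod p whenever z ≡ z' mod m and 0 ≤ a ≤ m−1). -/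
/-!
Over `𝔽_p`, `(-1)^a * binom(z, a)` is the `a`-th coefficient of `(1 - X)^z`, so the left-hand side
is the sum of the coefficients of degree `< m` of `∏ i, (1 - X)^(z_i) = (1 - X)^N`, `N = ∑ i, z_i`
(truncating each factor below degree `m` does not change the product modulo `X^m`). By Frobenius,
`(1 - X)^m = 1 - X^m ≡ 1` modulo `X^m`, so `(1 - X)^N ≡ (1 - X)^r` with `r = N % m < m`, and the
coefficient sum of the latter is its value `(1 - 1)^r` at `1`.
-/

open Finset Polynomial

variable {R : Type*} [CommRing R]

lemma Finset.dvd_prod_sub_prod {ι : Type*} (s : Finset ι) (f g : ι → R) {a : R}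
    (h : ∀ i ∈ s, a ∣ f i - g i) : a ∣ ∏ i ∈ s, f i - ∏ i ∈ s, g i := by
  rw [← Ideal.mem_span_singleton, ← Ideal.Quotient.eq, map_prod, map_prod]
  exact prod_congr rfl fun i hi => Ideal.Quotient.eq.2 (Ideal.mem_span_singleton.2 (h i hi))

namespace Polynomial

lemma coeff_one_sub_X_pow (n k : ℕ) :
    ((1 - X : R[X]) ^ n).coeff k = (-1) ^ k * n.choose k := by
  have hterm (j : ℕ) : (-X : R[X]) ^ j * 1 ^ (n - j) * (n.choose j : R[X]) =
      C ((-1 : R) ^ j * n.choose j) * X ^ j := by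
    rw [neg_pow, one_pow, mul_one, C_mul, C_pow, C_neg, C_1, ← C_eq_natCast]
    ring
  rw [sub_eq_neg_add, add_pow, finsetSum_coeff]
  simp only [hterm, coeff_C_mul_X_pow, sum_ite_eq, mem_range, Nat.lt_succ_iff]
  split_ifs with hk
  · rfl
  · rw [Nat.choose_eq_zero_of_lt (not_le.1 hk), Nat.cast_zero, mul_zero]

lemma X_pow_dvd_sum_coeff_sub (f : R[X]) (m : ℕ) :
    X ^ m ∣ ∑ j : Fin m, C (f.coeff j) * X ^ (j : ℕ) - f := by
  refine X_pow_dvd_iff.2 fun d hd => ?_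
  rw [coeff_sub, finsetSum_coeff,
    Fin.sum_univ_eq_sum_range (fun j : ℕ => (C (f.coeff j) * X ^ j : R[X]).coeff d) m]
  simp only [coeff_C_mul_X_pow, sum_ite_eq, mem_range, hd, if_true, sub_self]

lemma sum_range_coeff_eq_of_X_pow_dvd_sub {f g : R[X]} {m : ℕ} (h : X ^ m ∣ f - g) :
    ∑ s ∈ range m, f.coeff s = ∑ s ∈ range m, g.coeff s :=
  sum_congr rfl fun s hs => sub_eq_zero.1 <| by
    rw [← coeff_sub]
    exact X_pow_dvd_iff.1 h s (mem_range.1 hs)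

lemma sum_range_coeff_prod {ι : Type*} [Fintype ι] [DecidableEq ι] (P : ι → R[X]) (m : ℕ) :
    ∑ s ∈ range m, (∏ i, P i).coeff s =
      ∑ a ∈ univ.filter (fun a : ι → Fin m => ∑ i, (a i : ℕ) < m), ∏ i, (P i).coeff (a i) := by
  have htrunc : X ^ m ∣ ∏ i, ∑ j : Fin m, C ((P i).coeff j) * X ^ (j : ℕ) - ∏ i, P i :=
    dvd_prod_sub_prod _ _ _ fun i _ => X_pow_dvd_sum_coeff_sub (P i) m
  rw [← sum_range_coeff_eq_of_X_pow_dvd_sub htrunc, Fintype.prod_sum, sum_filter]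
  simp only [prod_mul_distrib, ← map_prod, prod_pow_eq_pow_sum, finsetSum_coeff, coeff_C_mul_X_pow]
  rw [sum_comm]
  simp only [sum_ite_eq', mem_range]

lemma X_pow_expChar_pow_dvd_one_sub_X_pow_sub (p : ℕ) [ExpChar R p] (l N : ℕ) :
    X ^ p ^ l ∣ (1 - X : R[X]) ^ N - (1 - X) ^ (N % p ^ l) := by
  have hFrob : (X : R[X]) ^ p ^ l ∣ (1 - X ^ p ^ l) ^ (N / p ^ l) - 1 := by
    have := sub_dvd_pow_sub_pow (1 - X ^ p ^ l : R[X]) 1 (N / p ^ l)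
    rwa [sub_sub_cancel_left, neg_dvd, one_pow] at this
  have hsplit : (1 - X : R[X]) ^ N = (1 - X) ^ (N % p ^ l) * (1 - X ^ p ^ l) ^ (N / p ^ l) := by
    conv_lhs => rw [← Nat.mod_add_div N (p ^ l), pow_add, pow_mul, sub_pow_expChar_pow, one_pow]
  rw [hsplit, ← mul_sub_one]
  exact dvd_mul_of_dvd_right hFrob _

end Polynomial

lemma sum_range_expChar_pow_neg_one_pow_mul_choose (p : ℕ) [ExpChar R p] (l N : ℕ) :
    ∑ s ∈ range (p ^ l), (-1) ^ s * (N.choose s : R) = if p ^ l ∣ N then 1 else 0 := by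
  have hdeg : ((1 - X : R[X]) ^ (N % p ^ l)).natDegree < p ^ l :=
    lt_of_le_of_lt (by compute_degree) (Nat.mod_lt N (expChar_pow_pos R p l))
  have heval := eval_eq_sum_range' hdeg 1
  simp only [one_pow, mul_one] at heval
  simp_rw [← coeff_one_sub_X_pow,
    sum_range_coeff_eq_of_X_pow_dvd_sub (X_pow_expChar_pow_dvd_one_sub_X_pow_sub p l N), ← heval]
  simp [zero_pow_eq, Nat.dvd_iff_mod_eq_zero]

theorem stmt17_general (p : ℕ) (hp : p.Prime) (l : ℕ) (k : ℕ)
    (z : Fin k → ZMod (p ^ l)) :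
    (∑ a ∈ Finset.univ.filter
        (fun a : Fin k → Fin (p ^ l) => ∑ i, (a i : ℕ) ≤ p ^ l - 1),
      (-1 : ZMod p) ^ (∑ i, (a i : ℕ)) * ∏ i, ((z i).val.choose (a i) : ZMod p)) =
      if (∑ i, z i) = 0 then 1 else 0 := by
  have := Fact.mk hp
  have hm : 0 < p ^ l := pow_pos hp.pos l
  have : NeZero (p ^ l) := ⟨hm.ne'⟩
  have hfilter : univ.filter (fun a : Fin k → Fin (p ^ l) => ∑ i, (a i : ℕ) ≤ p ^ l - 1) =
      univ.filter (fun a => ∑ i, (a i : ℕ) < p ^ l) :=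
    filter_congr fun a _ => by omega
  have hterm (a : Fin k → Fin (p ^ l)) :
      (-1 : ZMod p) ^ (∑ i, (a i : ℕ)) * ∏ i, ((z i).val.choose (a i) : ZMod p) =
        ∏ i, ((1 - X : (ZMod p)[X]) ^ (z i).val).coeff (a i) := by
    simp only [coeff_one_sub_X_pow, prod_mul_distrib, prod_pow_eq_pow_sum]
  have hzero : (∑ i, z i = 0) ↔ p ^ l ∣ ∑ i, (z i).val := by
    rw [← ZMod.natCast_eq_zero_iff]
    push_cast [ZMod.natCast_zmod_val]
    rfl
  rw [hfilter, sum_congr rfl fun a _ => hterm a, ← sum_range_coeff_prod, prod_pow_eq_pow_sum]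
  simp only [coeff_one_sub_X_pow, sum_range_expChar_pow_neg_one_pow_mul_choose p l, hzero]

theorem stmt17 (p : ℕ) (hp : p.Prime) (l : ℕ) (hl : 1 ≤ l) (k : ℕ) (hk : 1 ≤ k)
    (z : Fin k → ZMod (p ^ l)) :
    (∑ a ∈ Finset.univ.filter
        (fun a : Fin k → Fin (p ^ l) => ∑ i, (a i : ℕ) ≤ p ^ l - 1),
      (-1 : ZMod p) ^ (∑ i, (a i : ℕ)) * ∏ i, ((z i).val.choose (a i) : ZMod p)) =
      if (∑ i, z i) = 0 then 1 else 0 :=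
  stmt17_general p hp l k z
end

section
/- For integers m ≥ 2, k ≥ 3 and n ≥ 1, the number of n-tuples (a_1,…,a_n) ∈ {0,…,m−1}^n with a_1 + … + a_n ≤ n(m−1)/k is at most Γ_{m,k}^n, where Γ_{m,k} = min_{0<γ<1} (1 + γ + … + γ^{m−1}) / γ^{(m−1)/k}. -/
/-! Weight each tuple `a` by `γ ^ (a₁ + … + aₙ)`. Since `γ ≤ 1`, every counted tuple has weight at
least `γ ^ (n (m - 1) / k)`, while the weights of all tuples add up to `(1 + γ + … + γ ^ (m - 1)) ^ n`;
this is Markov's inequality for `γ ^ (Z₁ + … + Zₙ)` with `Zᵢ` uniform on `{0, …, m - 1}`. -/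

open Finset

lemma card_filter_mul_le_sum {α R : Type*} [Semiring R] [PartialOrder R] [IsOrderedRing R]
    (s : Finset α) (p : α → Prop) [DecidablePred p] (f : α → R) (c : R)
    (hf : ∀ a ∈ s, 0 ≤ f a) (hc : ∀ a ∈ s, p a → c ≤ f a) :
    #(s.filter p) * c ≤ ∑ a ∈ s, f a :=
  calc #(s.filter p) * c = #(s.filter p) • c := (nsmul_eq_mul _ _).symm
    _ ≤ ∑ a ∈ s.filter p, f a :=
      card_nsmul_le_sum _ _ _ fun a ha ↦ hc a (mem_filter.1 ha).1 (mem_filter.1 ha).2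
    _ ≤ ∑ a ∈ s, f a := sum_le_sum_of_subset_of_nonneg (filter_subset _ _) fun a ha _ ↦ hf a ha

lemma sum_pow_sum_fin_eq_geom_sum_pow {R : Type*} [CommSemiring R] (x : R) (m n : ℕ) :
    ∑ a : Fin n → Fin m, x ^ ∑ i, (a i : ℕ) = (∑ j ∈ range m, x ^ j) ^ n := by
  rw [← Fin.sum_univ_eq_sum_range, Fintype.sum_pow]
  simp only [prod_pow_eq_pow_sum]

lemma rpow_pow_le_pow_of_le_mul {γ r : ℝ} (hγ0 : 0 < γ) (hγ1 : γ ≤ 1) {n N : ℕ}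
    (hN : (N : ℝ) ≤ n * r) : (γ ^ r) ^ n ≤ γ ^ N := by
  rw [← Real.rpow_natCast, ← Real.rpow_mul hγ0.le, ← Real.rpow_natCast γ N, mul_comm]
  exact Real.rpow_le_rpow_of_exponent_ge hγ0 hγ1 hN

lemma natCast_le_mul_div_of_mul_le {k N n m : ℕ} (hk : 0 < k) (hm : 1 ≤ m)
    (h : k * N ≤ n * (m - 1)) : (N : ℝ) ≤ n * (((m : ℝ) - 1) / k) := by
  rw [mul_div_assoc', le_div_iff₀ (by positivity), mul_comm, ← Nat.cast_one, ← Nat.cast_sub hm]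
  exact_mod_cast h

theorem stmt18_general (m k n : ℕ) (hm : 2 ≤ m) (hk : 3 ≤ k)
    (γ : ℝ) (hγ0 : 0 < γ) (hγ1 : γ < 1) :
    ((Finset.univ.filter
        (fun a : Fin n → Fin m => k * ∑ i, (a i : ℕ) ≤ n * (m - 1))).card : ℝ) ≤
      ((∑ i ∈ Finset.range m, γ ^ i) / γ ^ (((m : ℝ) - 1) / k)) ^ n := by
  rw [div_pow, le_div_iff₀ (by positivity), ← sum_pow_sum_fin_eq_geom_sum_pow]
  refine card_filter_mul_le_sum _ _ _ _ (fun a _ ↦ by positivity) fun a _ ha ↦ ?_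
  exact rpow_pow_le_pow_of_le_mul hγ0 hγ1.le
    (natCast_le_mul_div_of_mul_le (by omega) (by omega) ha)

theorem stmt18 (m k n : ℕ) (hm : 2 ≤ m) (hk : 3 ≤ k) (hn : 1 ≤ n)
    (γ : ℝ) (hγ0 : 0 < γ) (hγ1 : γ < 1)
    (hmin : ∀ γ' : ℝ, 0 < γ' → γ' < 1 →
      (∑ i ∈ Finset.range m, γ ^ i) / γ ^ (((m : ℝ) - 1) / k) ≤
        (∑ i ∈ Finset.range m, γ' ^ i) / γ' ^ (((m : ℝ) - 1) / k)) :
    ((Finset.univ.filter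
        (fun a : Fin n → Fin m => k * ∑ i, (a i : ℕ) ≤ n * (m - 1))).card : ℝ) ≤
      ((∑ i ∈ Finset.range m, γ ^ i) / γ ^ (((m : ℝ) - 1) / k)) ^ n :=
  stmt18_general m k n hm hk γ hγ0 hγ1
end
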